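/- arXiv:1607.05503 — 6 statements merged into one kernel-verified Lean document; each statement's English description precedes it below -/
import Mathlib

section
/- Let p and q be coprime positive integers. Let λ be the number of pairs (i,j) of nonnegative integers such that S(i,j) = [i,i+1] × [j,j+1] is contained in the closed triangle T(p,q) = conv{(0,0),(p,0),(0,q)}, and let I be the number of pairs (i,j) with 0 ≤ i < p, 0 ≤ j < q such that the interior of S(i,j) intersects the segment ℓ(p,q) from (p,0) to (0,q). Then pq = 2λ + I. -/
open Set

/-- The unit lattice square `S(i,j) = [i,i+1] × [j,j+1] ⊆ ℝ²`. -/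
def unitSq (i j : ℤ) : Set (ℝ × ℝ) :=
  Set.Icc (i : ℝ) (i + 1) ×ˢ Set.Icc (j : ℝ) (j + 1)

/-- The closed triangle `T(p,q) = conv{(0,0),(p,0),(0,q)} ⊆ ℝ²`. -/
def lowerTri (p q : ℕ) : Set (ℝ × ℝ) :=
  convexHull ℝ ({(0, 0), ((p : ℝ), 0), (0, (q : ℝ))} : Set (ℝ × ℝ))

/-- The closed segment `ℓ(p,q)` from `(p,0)` to `(0,q)`. -/
def hypSeg (p q : ℕ) : Set (ℝ × ℝ) :=
  segment ℝ ((p : ℝ), 0) (0, (q : ℝ))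

lemma lowerTri_eq (p q : ℕ) (hp : 0 < p) (hq : 0 < q) :
    lowerTri p q = {z : ℝ × ℝ | 0 ≤ z.1 ∧ 0 ≤ z.2 ∧ q * z.1 + p * z.2 ≤ p * q} := by
  have hp' : (0:ℝ) < p := by exact_mod_cast hp
  have hq' : (0:ℝ) < q := by exact_mod_cast hq
  apply subset_antisymm
  · apply convexHull_min
    · intro z hz
      rcases hz with h | h | h <;> subst h <;>
        refine ⟨by simp, by simp, ?_⟩ <;> simp <;> nlinarith
    · intro x hx y hy a b ha hb hab
      simp only [mem_setOf_eq] at hx hy ⊢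
      simp only [Prod.fst_add, Prod.snd_add, Prod.smul_fst, Prod.smul_snd, smul_eq_mul]
      have hab' : (a + b) * (p * q : ℝ) = p * q := by rw [hab, one_mul]
      refine ⟨add_nonneg (mul_nonneg ha hx.1) (mul_nonneg hb hy.1),
        add_nonneg (mul_nonneg ha hx.2.1) (mul_nonneg hb hy.2.1), ?_⟩
      nlinarith [mul_le_mul_of_nonneg_left hx.2.2 ha, mul_le_mul_of_nonneg_left hy.2.2 hb]
  · rintro ⟨x, y⟩ ⟨hx, hy, hxy⟩
    simp only at hx hy hxy
    have hsum : x / p + y / q ≤ 1 := by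
      rw [div_add_div _ _ hp'.ne' hq'.ne', div_le_one (by positivity)]
      nlinarith
    have key := Finset.centerMass_mem_convexHull (Finset.univ : Finset (Fin 3))
      (w := ![1 - x/p - y/q, x/p, y/q]) (z := ![((0:ℝ),(0:ℝ)), ((p:ℝ),0), (0,(q:ℝ))])
      (by
        intro i _
        fin_cases i <;> simp
        · linarith
        · positivity
        · positivity)
      (by simp [Fin.sum_univ_three]; ring_nf; positivity)
      (s := {(0, 0), ((p : ℝ), 0), (0, (q : ℝ))})
      (by intro i _; fin_cases i <;> simp)
    have hw : ∑ i : Fin 3, ![1 - x/p - y/q, x/p, y/q] i = 1 := by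
      simp [Fin.sum_univ_three]; ring
    rw [Finset.centerMass, hw] at key
    simp only [Fin.sum_univ_three, inv_one, one_smul, Matrix.cons_val_zero,
      Matrix.cons_val_one, Matrix.head_cons, Matrix.cons_val_two, Matrix.tail_cons,
      Prod.smul_mk, smul_eq_mul, mul_zero, Prod.mk_add_mk, zero_add, add_zero] at key
    have hxx : x / p * p = x := by field_simp
    have hyy : y / q * q = y := by field_simp
    rw [hxx, hyy] at key
    exact key

lemma sub_iff (p q : ℕ) (hp : 0 < p) (hq : 0 < q) (i j : ℕ) :
    unitSq i j ⊆ lowerTri p q ↔ q * (i + 1) + p * (j + 1) ≤ p * q := by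
  rw [lowerTri_eq p q hp hq]
  constructor
  · intro h
    have hmem : ((i : ℝ) + 1, (j : ℝ) + 1) ∈ unitSq i j := by
      constructor <;> simp [unitSq]
    have := h hmem
    simp only [mem_setOf_eq] at this
    have h3 := this.2.2
    have : ((q * (i + 1) + p * (j + 1) : ℕ) : ℝ) ≤ ((p * q : ℕ) : ℝ) := by
      push_cast; push_cast at h3; linarith
    exact_mod_cast this
  · intro h
    rintro ⟨x, y⟩ ⟨hx, hy⟩
    simp only [unitSq, mem_Icc, Int.cast_natCast] at hx hy
    have h' : ((q * (i + 1) + p * (j + 1) : ℕ) : ℝ) ≤ ((p * q : ℕ) : ℝ) := by exact_mod_cast h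
    push_cast at h'
    have hq' : (0:ℝ) ≤ q := by positivity
    have hp' : (0:ℝ) ≤ p := by positivity
    have hi0 : (0:ℝ) ≤ (i:ℝ) := by positivity
    have hj0 : (0:ℝ) ≤ (j:ℝ) := by positivity
    refine ⟨by simp; linarith, by simp; linarith, ?_⟩
    simp only
    nlinarith [mul_le_mul_of_nonneg_left hx.2 hq', mul_le_mul_of_nonneg_left hy.2 hp']

lemma meet_iff (p q : ℕ) (hp : 0 < p) (hq : 0 < q) (i j : ℕ) (hi : i < p) (hj : j < q) :
    (interior (unitSq i j) ∩ hypSeg p q).Nonempty ↔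
      q * i + p * j < p * q ∧ p * q < q * (i + 1) + p * (j + 1) := by
  have hp' : (0:ℝ) < p := by exact_mod_cast hp
  have hq' : (0:ℝ) < q := by exact_mod_cast hq
  have hint : interior (unitSq i j) = Ioo (i:ℝ) (i+1) ×ˢ Ioo (j:ℝ) (j+1) := by
    rw [unitSq, interior_prod_eq, interior_Icc, interior_Icc]
    norm_num
  constructor
  · rintro ⟨⟨x, y⟩, hmem, hseg⟩
    rw [hint] at hmem
    obtain ⟨hx, hy⟩ := hmem
    simp only [mem_Ioo] at hx hy
    rw [hypSeg, segment_eq_image] at hseg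
    obtain ⟨t, ht, heq⟩ := hseg
    have hxe : x = (1 - t) * p := by
      have := congrArg Prod.fst heq
      simp [Prod.ext_iff] at this ⊢
      linarith [this]
    have hye : y = t * q := by
      have := congrArg Prod.snd heq
      simp [Prod.ext_iff] at this ⊢
      linarith [this]
    have hline : (q:ℝ) * x + p * y = p * q := by rw [hxe, hye]; ring
    constructor
    · have : ((q * i + p * j : ℕ) : ℝ) < ((p * q : ℕ) : ℝ) := by
        push_cast; nlinarith [hx.1, hy.1]
      exact_mod_cast this
    · have : ((p * q : ℕ) : ℝ) < ((q * (i + 1) + p * (j + 1) : ℕ) : ℝ) := by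
        push_cast; nlinarith [hx.2, hy.2]
      exact_mod_cast this
  · rintro ⟨h1, h2⟩
    have h1' : (q:ℝ) * i + p * j < p * q := by exact_mod_cast h1
    have h2' : (p:ℝ) * q < q * (i + 1) + p * (j + 1) := by
      have : ((p*q:ℕ):ℝ) < ((q * (i + 1) + p * (j + 1) : ℕ):ℝ) := by exact_mod_cast h2
      push_cast at this; linarith
    have hi' : (i:ℝ) + 1 ≤ p := by exact_mod_cast hi
    have hj' : (j:ℝ) + 1 ≤ q := by exact_mod_cast hj
    set lo : ℝ := max (1 - ((i:ℝ)+1)/p) ((j:ℝ)/q) with hlo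
    set hi2 : ℝ := min (1 - (i:ℝ)/p) (((j:ℝ)+1)/q) with hhi
    have e1 : (1:ℝ) - ((i:ℝ)+1)/p = ((p:ℝ)-((i:ℝ)+1))/p := by field_simp
    have e2 : (1:ℝ) - (i:ℝ)/p = ((p:ℝ)-(i:ℝ))/p := by field_simp
    have hlohi : lo < hi2 := by
      apply max_lt <;> apply lt_min
      · rw [e1, e2, div_lt_div_iff₀ hp' hp']
        nlinarith
      · rw [e1, div_lt_div_iff₀ hp' hq']
        nlinarith
      · rw [e2, div_lt_div_iff₀ hq' hp']
        nlinarith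
      · rw [div_lt_div_iff₀ hq' hq']
        nlinarith
    set t : ℝ := (lo + hi2)/2 with htdef
    have htlo : lo < t := by linarith
    have hthi : t < hi2 := by linarith
    have ht1 : (j:ℝ)/q < t := lt_of_le_of_lt (le_max_right _ _) htlo
    have ht2 : t < ((j:ℝ)+1)/q := lt_of_lt_of_le hthi (min_le_right _ _)
    have ht3 : 1 - ((i:ℝ)+1)/p < t := lt_of_le_of_lt (le_max_left _ _) htlo
    have ht4 : t < 1 - (i:ℝ)/p := lt_of_lt_of_le hthi (min_le_left _ _)
    have ht0 : 0 ≤ t := le_trans (by positivity) ht1.le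
    have htle1 : t ≤ 1 := by
      have : ((j:ℝ)+1)/q ≤ 1 := by rw [div_le_one hq']; linarith
      linarith
    refine ⟨((1-t)*p, t*q), ?_, ?_⟩
    · rw [hint]
      have hip : ((i:ℝ))/p * p = i := div_mul_cancel₀ _ hp'.ne'
      have hip1 : (((i:ℝ))+1)/p * p = (i:ℝ)+1 := div_mul_cancel₀ _ hp'.ne'
      have hjq : ((j:ℝ))/q * q = j := div_mul_cancel₀ _ hq'.ne'
      have hjq1 : (((j:ℝ))+1)/q * q = (j:ℝ)+1 := div_mul_cancel₀ _ hq'.ne'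
      refine ⟨⟨?_, ?_⟩, ?_, ?_⟩
      · show (i:ℝ) < (1-t)*p
        have h := mul_lt_mul_of_pos_right ht4 hp'
        rw [sub_mul, one_mul, hip] at h
        rw [sub_mul, one_mul]; linarith
      · show (1-t)*p < (i:ℝ)+1
        have h := mul_lt_mul_of_pos_right ht3 hp'
        rw [sub_mul, one_mul, hip1] at h
        rw [sub_mul, one_mul]; linarith
      · show (j:ℝ) < t*q
        have h := mul_lt_mul_of_pos_right ht1 hq'
        rw [hjq] at h; exact h
      · show t*q < (j:ℝ)+1
        have h := mul_lt_mul_of_pos_right ht2 hq'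
        rw [hjq1] at h; exact h
    · rw [hypSeg, segment_eq_image]
      refine ⟨t, ⟨ht0, htle1⟩, ?_⟩
      simp [Prod.ext_iff]

lemma key1 (p q : ℕ) (hp : 0 < p) (hq : 0 < q) (hpq : Nat.Coprime p q)
    (i j : ℕ) (hi : i < p) (hj : j < q) : q * i + p * j ≠ p * q := by
  intro h
  have hd : q ∣ p * j := by
    have : q ∣ q * i + p * j := h ▸ Dvd.intro_left p rfl
    exact (Nat.dvd_add_right ⟨i, rfl⟩).mp this
  have hj0 : q ∣ j := (Nat.Coprime.dvd_of_dvd_mul_left hpq.symm) hd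
  have hj' : j = 0 := Nat.eq_zero_of_dvd_of_lt hj0 hj
  subst hj'
  simp at h
  have hqi : q * i = q * p := by rw [h, Nat.mul_comm]
  have : i = p := Nat.eq_of_mul_eq_mul_left hq hqi
  omega

lemma key2 (p q : ℕ) (hp : 0 < p) (hq : 0 < q) (hpq : Nat.Coprime p q)
    (i j : ℕ) (hi : i < p) (hj : j < q) : q * (i + 1) + p * (j + 1) ≠ p * q := by
  intro h
  have hd : q ∣ p * (j + 1) := by
    have : q ∣ q * (i+1) + p * (j+1) := h ▸ Dvd.intro_left p rfl
    exact (Nat.dvd_add_right ⟨i+1, rfl⟩).mp this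
  have hj1 : q ∣ j + 1 := (Nat.Coprime.dvd_of_dvd_mul_left hpq.symm) hd
  have hle : q ≤ j + 1 := Nat.le_of_dvd (by omega) hj1
  have hjq : j + 1 = q := by omega
  rw [hjq] at h
  have hpos : 0 < q * (i + 1) := Nat.mul_pos hq (by omega)
  omega

lemma countLemma (p q : ℕ) (hp : 0 < p) (hq : 0 < q) (hpq : Nat.Coprime p q) :
    p * q =
      2 * ((Finset.range p ×ˢ Finset.range q).filter
            (fun ij => q * (ij.1 + 1) + p * (ij.2 + 1) ≤ p * q)).card +
      ((Finset.range p ×ˢ Finset.range q).filter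
            (fun ij => q * ij.1 + p * ij.2 < p * q ∧
              p * q < q * (ij.1 + 1) + p * (ij.2 + 1))).card := by
  classical
  set s := Finset.range p ×ˢ Finset.range q with hs
  set P : ℕ × ℕ → Prop := fun ij => q * (ij.1 + 1) + p * (ij.2 + 1) ≤ p * q with hP
  set Q : ℕ × ℕ → Prop := fun ij => q * ij.1 + p * ij.2 < p * q ∧
      p * q < q * (ij.1 + 1) + p * (ij.2 + 1) with hQ
  set R : ℕ × ℕ → Prop := fun ij => p * q < q * ij.1 + p * ij.2 with hR
  have hsplit1 : (s.filter P).card + (s.filter (fun x => ¬ P x)).card = s.card :=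
    Finset.card_filter_add_card_filter_not _
  have hsplit2 : ((s.filter (fun x => ¬ P x)).filter Q).card
      + ((s.filter (fun x => ¬ P x)).filter (fun x => ¬ Q x)).card
      = (s.filter (fun x => ¬ P x)).card :=
    Finset.card_filter_add_card_filter_not _
  have hmem : ∀ x ∈ s, x.1 < p ∧ x.2 < q := by
    intro x hx
    simp only [hs, Finset.mem_product, Finset.mem_range] at hx
    exact hx
  have hQeq : (s.filter (fun x => ¬ P x)).filter Q = s.filter Q := by
    rw [Finset.filter_filter]
    apply Finset.filter_congr
    intro x hx
    simp only [hP, hQ]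
    constructor
    · rintro ⟨_, h⟩; exact h
    · intro h; exact ⟨by omega, h⟩
  have hReq : (s.filter (fun x => ¬ P x)).filter (fun x => ¬ Q x) = s.filter R := by
    rw [Finset.filter_filter]
    apply Finset.filter_congr
    intro x hx
    obtain ⟨h1, h2⟩ := hmem x hx
    have k1 := key1 p q hp hq hpq x.1 x.2 h1 h2
    have k2 := key2 p q hp hq hpq x.1 x.2 h1 h2
    simp only [hP, hQ, hR]
    constructor
    · rintro ⟨hnp, hnq⟩
      have hb : p * q < q * (x.1 + 1) + p * (x.2 + 1) := by omega
      have : ¬ (q * x.1 + p * x.2 < p * q) := fun hlt => hnq ⟨hlt, hb⟩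
      omega
    · intro hr
      have e1 : q * (x.1 + 1) = q * x.1 + q := by ring
      have e2 : p * (x.2 + 1) = p * x.2 + p := by ring
      exact ⟨by omega, fun hc => by omega⟩
  have hcardAC : (s.filter P).card = (s.filter R).card := by
    apply Finset.card_bij' (fun a _ => (p - 1 - a.1, q - 1 - a.2))
      (fun a _ => (p - 1 - a.1, q - 1 - a.2))
    · intro a ha
      simp only [Finset.mem_filter, hs, Finset.mem_product, Finset.mem_range, hP, hR] at ha ⊢
      obtain ⟨⟨h1, h2⟩, h3⟩ := ha
      have k2 := key2 p q hp hq hpq a.1 a.2 h1 h2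
      refine ⟨⟨by omega, by omega⟩, ?_⟩
      have e1 : q * (p - 1 - a.1) + q * (a.1 + 1) = q * p := by
        rw [← Nat.mul_add]; congr 1; omega
      have e2 : p * (q - 1 - a.2) + p * (a.2 + 1) = p * q := by
        rw [← Nat.mul_add]; congr 1; omega
      have e3 : q * p = p * q := Nat.mul_comm q p
      omega
    · intro a ha
      simp only [Finset.mem_filter, hs, Finset.mem_product, Finset.mem_range, hP, hR] at ha ⊢
      obtain ⟨⟨h1, h2⟩, h3⟩ := ha
      refine ⟨⟨by omega, by omega⟩, ?_⟩
      have e0 : p - 1 - a.1 + 1 = p - a.1 := by omega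
      have e0' : q - 1 - a.2 + 1 = q - a.2 := by omega
      rw [e0, e0']
      have e1 : q * (p - a.1) + q * a.1 = q * p := by
        rw [← Nat.mul_add]; congr 1; omega
      have e2 : p * (q - a.2) + p * a.2 = p * q := by
        rw [← Nat.mul_add]; congr 1; omega
      have e3 : q * p = p * q := Nat.mul_comm q p
      omega
    · intro a ha
      simp only [Finset.mem_filter, hs, Finset.mem_product, Finset.mem_range] at ha
      obtain ⟨⟨h1, h2⟩, _⟩ := ha
      ext <;> simp <;> omega
    · intro a ha
      simp only [Finset.mem_filter, hs, Finset.mem_product, Finset.mem_range] at ha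
      obtain ⟨⟨h1, h2⟩, _⟩ := ha
      ext <;> simp <;> omega
  have hcards : s.card = p * q := by
    simp [hs, Finset.card_product]
  rw [hQeq, hReq] at hsplit2
  have eA : (Finset.filter (fun ij => q * (ij.1 + 1) + p * (ij.2 + 1) ≤ p * q) s).card
      = (s.filter P).card := rfl
  have eB : (Finset.filter (fun ij => q * ij.1 + p * ij.2 < p * q ∧
      p * q < q * (ij.1 + 1) + p * (ij.2 + 1)) s).card = (s.filter Q).card := rfl
  rw [eA, eB]
  omega

lemma bound_of_sub (p q : ℕ) (hp : 0 < p) (hq : 0 < q) (i j : ℕ)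
    (h : q * (i + 1) + p * (j + 1) ≤ p * q) : i < p ∧ j < q := by
  constructor
  · by_contra hc
    push_neg at hc
    have h1 : q * (p + 1) ≤ q * (i + 1) := Nat.mul_le_mul_left _ (by omega)
    have h2 : q * (p + 1) = q * p + q := by ring
    have h3 : q * p = p * q := Nat.mul_comm q p
    have h4 : 0 < p * (j + 1) := Nat.mul_pos hp (by omega)
    omega
  · by_contra hc
    push_neg at hc
    have h1 : p * (q + 1) ≤ p * (j + 1) := Nat.mul_le_mul_left _ (by omega)
    have h2 : p * (q + 1) = p * q + p := by ring
    have h4 : 0 < q * (i + 1) := Nat.mul_pos hq (by omega)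
    omega

/-- For coprime positive integers `p, q`: if `λ` is the number of unit lattice squares
with nonnegative-integer corner contained in the triangle `conv{(0,0),(p,0),(0,q)}`, and
`I` is the number of unit lattice squares of the rectangle `[0,p] × [0,q]` whose interior
meets the segment from `(p,0)` to `(0,q)`, then `pq = 2λ + I`. -/
theorem rectangle_decomposition (p q : ℕ) (hp : 0 < p) (hq : 0 < q)
    (hpq : Nat.Coprime p q) :
    p * q =
      2 * {ij : ℕ × ℕ | unitSq ij.1 ij.2 ⊆ lowerTri p q}.ncard +
      {ij : ℕ × ℕ | ij.1 < p ∧ ij.2 < q ∧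
        (interior (unitSq ij.1 ij.2) ∩ hypSeg p q).Nonempty}.ncard := by
  have hA : {ij : ℕ × ℕ | unitSq ij.1 ij.2 ⊆ lowerTri p q}
      = ↑((Finset.range p ×ˢ Finset.range q).filter
            (fun ij => q * (ij.1 + 1) + p * (ij.2 + 1) ≤ p * q)) := by
    ext ⟨i, j⟩
    simp only [mem_setOf_eq, Finset.coe_filter, Finset.mem_product, Finset.mem_range,
      sub_iff p q hp hq i j]
    constructor
    · intro h
      exact ⟨bound_of_sub p q hp hq i j h, h⟩
    · rintro ⟨_, h⟩
      exact h
  have hB : {ij : ℕ × ℕ | ij.1 < p ∧ ij.2 < q ∧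
        (interior (unitSq ij.1 ij.2) ∩ hypSeg p q).Nonempty}
      = ↑((Finset.range p ×ˢ Finset.range q).filter
            (fun ij => q * ij.1 + p * ij.2 < p * q ∧
              p * q < q * (ij.1 + 1) + p * (ij.2 + 1))) := by
    ext ⟨i, j⟩
    simp only [mem_setOf_eq, Finset.coe_filter, Finset.mem_product, Finset.mem_range]
    constructor
    · rintro ⟨hi, hj, h⟩
      exact ⟨⟨hi, hj⟩, (meet_iff p q hp hq i j hi hj).mp h⟩
    · rintro ⟨⟨hi, hj⟩, h⟩
      exact ⟨hi, hj, (meet_iff p q hp hq i j hi hj).mpr h⟩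
  rw [hA, hB, Set.ncard_coe_finset, Set.ncard_coe_finset]
  exact countLemma p q hp hq hpq
end

section
/- Let p and q be coprime integers with 1 < p < q, and write q = pk + l with integers k ≥ 1 and 0 < l < p. For every integer i with 1 ≤ i ≤ p − 2, the number of integers j with 0 ≤ j < q such that the interior of the unit lattice square S(i,j) = [i,i+1] × [j,j+1] intersects the segment ℓ(p,q) from (p,0) to (0,q) equals k + 1 − ⌊li/p⌋ + ⌊l(i+1)/p⌋. -/
open Set

lemma mem_char (p q i j : ℕ) (hp : 0 < p) (hq : 0 < q) (hi1 : 1 ≤ i) (hip : i + 1 < p) :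
    (interior (unitSq (i:ℤ) (j:ℤ)) ∩ hypSeg p q).Nonempty ↔
      ((q:ℝ)*((p:ℝ)-i-1)/p < (j:ℝ)+1 ∧ (j:ℝ) < (q:ℝ)*((p:ℝ)-i)/p) := by
  have hp' : (0:ℝ) < p := by exact_mod_cast hp
  have hq' : (0:ℝ) < q := by exact_mod_cast hq
  have hi1' : (1:ℝ) ≤ i := by exact_mod_cast hi1
  have hip' : (i:ℝ) + 1 < p := by exact_mod_cast hip
  rw [unitSq, interior_prod_eq, interior_Icc, interior_Icc, hypSeg, segment_eq_image]
  constructor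
  · rintro ⟨z, ⟨⟨hx1, hx2⟩, hy1, hy2⟩, t, ⟨ht0, ht1⟩, hzt⟩
    have hz1 : z.1 = (1 - t) * p := by rw [← hzt]; simp
    have hz2 : z.2 = t * q := by rw [← hzt]; simp
    rw [hz1] at hx1 hx2
    rw [hz2] at hy1 hy2
    push_cast at hx1 hx2 hy1 hy2 ⊢
    constructor
    · rw [div_lt_iff₀ hp']
      nlinarith
    · rw [lt_div_iff₀ hp']
      nlinarith
  · rintro ⟨h1, h2⟩
    set A : ℝ := (q:ℝ)*((p:ℝ)-i-1)/p with hA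
    set B : ℝ := (q:ℝ)*((p:ℝ)-i)/p with hB
    have hAB : A < B := by
      rw [hA, hB, div_lt_div_iff₀ hp' hp']
      nlinarith
    have hA0 : 0 ≤ A := by
      apply div_nonneg _ hp'.le
      nlinarith
    have hBq : B ≤ q := by
      rw [hB, div_le_iff₀ hp']
      nlinarith
    set y : ℝ := (max (j:ℝ) A + min ((j:ℝ)+1) B)/2 with hy
    have hLR : max (j:ℝ) A < min ((j:ℝ)+1) B := by
      rcases max_cases (j:ℝ) A with ⟨he, _⟩ | ⟨he, _⟩ <;> rw [he] <;>
        [exact lt_min (by linarith) h2; exact lt_min h1 hAB]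
    have hy1 : max (j:ℝ) A < y := by rw [hy]; linarith
    have hy2 : y < min ((j:ℝ)+1) B := by rw [hy]; linarith
    have hjy : (j:ℝ) < y := lt_of_le_of_lt (le_max_left _ _) hy1
    have hAy : A < y := lt_of_le_of_lt (le_max_right _ _) hy1
    have hyj : y < (j:ℝ)+1 := lt_of_lt_of_le hy2 (min_le_left _ _)
    have hyB : y < B := lt_of_lt_of_le hy2 (min_le_right _ _)
    have hy0 : 0 ≤ y := le_of_lt (lt_of_le_of_lt hA0 hAy)
    have hyB' : y * p < q * ((p:ℝ)-i) := by
      rw [hB] at hyB; exact (lt_div_iff₀ hp').mp hyB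
    have hAy' : (q:ℝ) * ((p:ℝ)-i-1) < y * p := by
      rw [hA] at hAy; exact (div_lt_iff₀ hp').mp hAy
    have e : (1 - y/q)*(p:ℝ) = ((q:ℝ)*p - y*p)/q := by field_simp
    refine ⟨((1 - y/q)*p, y), ⟨⟨?_, ?_⟩, ?_, ?_⟩, y/q, ⟨?_, ?_⟩, ?_⟩
    · push_cast
      rw [e, lt_div_iff₀ hq']; nlinarith
    · push_cast
      rw [e, div_lt_iff₀ hq']; nlinarith
    · push_cast; exact hjy
    · push_cast; exact hyj
    · exact div_nonneg hy0 hq'.le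
    · rw [div_le_one hq']; linarith
    · have hyq : y/q * q = y := by field_simp
      simp [Prod.ext_iff, hyq]

lemma floor_sub_div (p m : ℕ) (hp : 0 < p) (hnd : ¬ (p ∣ m)) (C : ℤ) :
    ⌊(C:ℚ) - (m:ℚ)/p⌋ = C - ⌊(m:ℚ)/p⌋ - 1 := by
  have hp' : (0:ℚ) < p := by exact_mod_cast hp
  set M : ℤ := ⌊(m:ℚ)/p⌋ with hM
  have h1 : (M:ℚ) ≤ (m:ℚ)/p := Int.floor_le _
  have h2 : (m:ℚ)/p < M + 1 := Int.lt_floor_add_one _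
  have hne : (M:ℚ) ≠ (m:ℚ)/p := by
    intro h
    apply hnd
    have : (m:ℚ) = M * p := by field_simp at h; linarith
    have hz : (m:ℤ) = M * p := by exact_mod_cast this
    have : (p:ℤ) ∣ (m:ℤ) := ⟨M, by linarith⟩
    exact_mod_cast this
  have h1' : (M:ℚ) < (m:ℚ)/p := lt_of_le_of_ne h1 hne
  rw [Int.floor_eq_iff]
  constructor <;> push_cast <;> linarith

/-- Let `p, q` be coprime with `1 < p < q` and write `q = pk + l`, `k ≥ 1`, `0 < l < p`.
For every integer `i` with `1 ≤ i ≤ p - 2`, the number of integers `j` with `0 ≤ j < q`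
such that the interior of `S(i,j)` meets the segment from `(p,0)` to `(0,q)` equals
`k + 1 - ⌊li/p⌋ + ⌊l(i+1)/p⌋`. -/
theorem middle_column_count (p q k l : ℕ) (hpq : Nat.Coprime p q)
    (hp : 1 < p) (hq : p < q) (hk : 1 ≤ k) (hl0 : 0 < l) (hlp : l < p)
    (hdiv : q = p * k + l) (i : ℕ) (hi1 : 1 ≤ i) (hi2 : i ≤ p - 2) :
    ({j : ℕ | j < q ∧
        (interior (unitSq i j) ∩ hypSeg p q).Nonempty}.ncard : ℤ) =
      (k : ℤ) + 1 - ⌊((l : ℚ) * i) / p⌋ + ⌊((l : ℚ) * (i + 1)) / p⌋ := by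
  have hp0 : 0 < p := by omega
  have hq0 : 0 < q := by omega
  have hip : i + 1 < p := by omega
  have hp' : (0:ℚ) < p := by exact_mod_cast hp0
  -- coprimality of p and l
  have hcl : Nat.Coprime p l := by
    have h := hpq
    rw [hdiv, show p*k+l = l+k*p from by ring] at h
    rwa [Nat.Coprime, Nat.gcd_add_mul_right_right] at h
  have hnd1 : ¬ (p ∣ l*i) := by
    intro hd
    have hpi : p ∣ i := Nat.Coprime.dvd_of_dvd_mul_left hcl hd
    have := Nat.le_of_dvd (by omega) hpi
    omega
  have hnd2 : ¬ (p ∣ l*(i+1)) := by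
    intro hd
    have hpi : p ∣ (i+1) := Nat.Coprime.dvd_of_dvd_mul_left hcl hd
    have := Nat.le_of_dvd (by omega) hpi
    omega
  -- rational endpoints
  set Aq : ℚ := (q:ℚ)*((p:ℚ)-i-1)/p with hAq
  set Bq : ℚ := (q:ℚ)*((p:ℚ)-i)/p with hBq
  set M1 : ℤ := ⌊((l*i:ℕ):ℚ)/p⌋ with hM1
  set M2 : ℤ := ⌊((l*(i+1):ℕ):ℚ)/p⌋ with hM2
  set C1 : ℤ := (k:ℤ)*((p:ℤ)-i)+l with hC1
  set C2 : ℤ := (k:ℤ)*((p:ℤ)-i-1)+l with hC2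
  have hBeq : Bq = (C1:ℚ) - ((l*i:ℕ):ℚ)/p := by
    rw [hBq, hC1, hdiv]
    push_cast
    field_simp
    ring
  have hAeq : Aq = (C2:ℚ) - ((l*(i+1):ℕ):ℚ)/p := by
    rw [hAq, hC2, hdiv]
    push_cast
    field_simp
    ring
  set a : ℤ := ⌊Aq⌋ with ha'
  set b : ℤ := ⌊Bq⌋ with hb'
  have hb : b = C1 - M1 - 1 := by
    rw [hb', hBeq, floor_sub_div p (l*i) hp0 hnd1 C1, hM1]
  have ha : a = C2 - M2 - 1 := by
    rw [ha', hAeq, floor_sub_div p (l*(i+1)) hp0 hnd2 C2, hM2]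
  have ha0 : 0 ≤ a := by
    rw [ha']
    apply Int.floor_nonneg.mpr
    rw [hAq]
    apply div_nonneg _ hp'.le
    have h1 : (i:ℚ) + 1 < p := by exact_mod_cast hip
    have h2 : (0:ℚ) ≤ q := by positivity
    nlinarith
  have hbq : b < q := by
    rw [hb']
    apply Int.floor_lt.mpr
    rw [hBq]
    push_cast
    rw [div_lt_iff₀ hp']
    have h1 : (1:ℚ) ≤ i := by exact_mod_cast hi1
    have h2 : (0:ℚ) < q := by exact_mod_cast hq0
    nlinarith
  have hab : a ≤ b := by
    rw [ha', hb']
    apply Int.floor_le_floor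
    rw [hAq, hBq]
    rw [div_le_div_iff_of_pos_right hp']
    have h2 : (0:ℚ) ≤ q := by positivity
    nlinarith
  -- the set is an interval
  have hset : {j : ℕ | j < q ∧ (interior (unitSq i j) ∩ hypSeg p q).Nonempty}
      = ↑(Finset.Icc a.toNat b.toNat) := by
    ext j
    rw [Finset.coe_Icc]
    simp only [Set.mem_setOf_eq, Set.mem_Icc]
    rw [mem_char p q i j hp0 hq0 hi1 hip]
    have castA : ((Aq:ℚ):ℝ) = (q:ℝ)*((p:ℝ)-i-1)/p := by rw [hAq]; push_cast; ring
    have castB : ((Bq:ℚ):ℝ) = (q:ℝ)*((p:ℝ)-i)/p := by rw [hBq]; push_cast; ring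
    rw [← castA, ← castB]
    have e1 : (((Aq:ℚ)):ℝ) < (j:ℝ)+1 ↔ Aq < (j:ℚ)+1 := by
      rw [show ((j:ℝ)+1) = (((j:ℚ)+1 : ℚ):ℝ) by push_cast; ring]
      exact Rat.cast_lt
    have e2 : ((j:ℝ)) < ((Bq:ℚ):ℝ) ↔ (j:ℚ) < Bq := by
      rw [show ((j:ℝ)) = (((j:ℚ) : ℚ):ℝ) by push_cast; ring]
      exact Rat.cast_lt
    rw [e1, e2]
    constructor
    · rintro ⟨hjq, h1, h2⟩
      have haj : a < (j:ℤ) + 1 := by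
        rw [ha']
        apply Int.floor_lt.mpr
        push_cast
        exact h1
      have hjb : (j:ℤ) ≤ b := by
        rw [hb']
        apply Int.le_floor.mpr
        push_cast
        exact h2.le
      omega
    · rintro ⟨h1', h2'⟩
      have haj : a ≤ (j:ℤ) := by omega
      have hjb : (j:ℤ) ≤ b := by omega
      refine ⟨by omega, ?_, ?_⟩
      · have t1 : Aq < a + 1 := by rw [ha']; exact Int.lt_floor_add_one Aq
        have t2 : ((a:ℤ):ℚ) ≤ (j:ℚ) := by exact_mod_cast haj
        push_cast at t1 ⊢
        linarith
      · have t1 : ((l*i:ℕ):ℚ)/p < M1 + 1 := by rw [hM1]; exact Int.lt_floor_add_one _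
        have t2 : (j:ℤ) ≤ C1 - M1 - 1 := by omega
        have t3 : ((j:ℤ):ℚ) ≤ ((C1 - M1 - 1 : ℤ):ℚ) := by exact_mod_cast t2
        rw [hBeq]
        push_cast at t1 t3 ⊢
        linarith
  rw [hset, Set.ncard_coe_finset, Nat.card_Icc]
  have hfl1 : ⌊((l : ℚ) * i) / p⌋ = M1 := by
    rw [hM1]; congr 1; push_cast; ring
  have hfl2 : ⌊((l : ℚ) * (i + 1)) / p⌋ = M2 := by
    rw [hM2]; congr 1; push_cast; ring
  rw [hfl1, hfl2]
  have hCk : C1 = C2 + k := by rw [hC1, hC2]; ring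
  omega
end

section
/- Fix a Newton diagram datum: an integer n ≥ 1 and lattice points (P₀,Q₀),…,(Pₙ,Qₙ) ∈ ℤ² with P₀ = 0, Qₙ = 0, P₀ < P₁ < … < Pₙ, Q₀ > Q₁ > … > Qₙ, p = Pₙ, q = Q₀, pᵢ = Pᵢ − Pᵢ₋₁, qᵢ = Qᵢ₋₁ − Qᵢ, q₁/p₁ > … > qₙ/pₙ, and gcd(pᵢ,qᵢ) = 1 for each i. Let Γ₋ be the closure of (ℝ≥0)² \ (conv{(P₀,Q₀),…,(Pₙ,Qₙ)} + (ℝ≥0)²). Then the number of pairs (i,j) of nonnegative integers with S(i,j) = [i,i+1] × [j,j+1] ⊆ Γ₋ equals Σ_{i=1}^{n} (pᵢ−1)(qᵢ−1)/2 + Σ_{i=1}^{n−1} pᵢQᵢ. -/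
open Set MeasureTheory Pointwise

/-- The region `Γ₋`: the closure of `(ℝ≥0)² \ (conv{(P₀,Q₀),…,(Pₙ,Qₙ)} + (ℝ≥0)²)`,
where `+` denotes the Minkowski sum. -/
def gammaMinus (n : ℕ) (P Q : ℕ → ℤ) : Set (ℝ × ℝ) :=
  closure ((Set.Ici (0 : ℝ) ×ˢ Set.Ici (0 : ℝ)) \
    (convexHull ℝ {x : ℝ × ℝ | ∃ i ≤ n, x = ((P i : ℝ), (Q i : ℝ))} +
      Set.Ici (0 : ℝ) ×ˢ Set.Ici (0 : ℝ)))

/-!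
`Γ₋` is the part of the quadrant on or below one of the edge lines `qₖ x + pₖ y = cₖ`,
`cₖ = qₖ Pₖ + pₖ Qₖ`, so a unit square lies in `Γ₋` iff its upper-right corner does. By
convexity, over the column range `[Pₖ₋₁, Pₖ)` of the `k`-th edge the `k`-th line is the
highest one, so column `i` there holds `⌊(cₖ - qₖ (i + 1)) / pₖ⌋` squares. Summed over the
range, this is the rectangle `pₖ Qₖ` plus `(pₖ - 1)(qₖ - 1)/2` squares under the edge, the
latter because `⌊q a / p⌋ + ⌊q (p - a) / p⌋ = q - 1` for coprime `p, q` and `0 < a < p`.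
-/

theorem Int.ediv_add_mul_sub_ediv_of_not_dvd {p x : ℤ} (hp : 0 < p) (hx : ¬ p ∣ x) (q : ℤ) :
    x / p + (p * q - x) / p = q - 1 := by
  rw [sub_eq_neg_add, Int.add_mul_ediv_left _ _ hp.ne', Int.neg_ediv, if_neg hx,
    Int.sign_eq_one_of_pos hp]
  ring

/-- Pair `x = a + 1` with `p - x`: `⌊q x / p⌋ + ⌊q (p - x) / p⌋ = q - 1` as `p ∤ q x`. -/
theorem two_mul_sum_range_mul_ediv {p : ℕ} {q : ℤ} (hp : 0 < p) (hpq : IsCoprime (p : ℤ) q) :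
    2 * ∑ a ∈ Finset.range p, q * a / p = (p - 1) * (q - 1) := by
  obtain ⟨m, rfl⟩ : ∃ m, p = m + 1 := ⟨p - 1, by omega⟩
  have hpair : ∀ a ∈ Finset.range m,
      q * ((a + 1 : ℕ) : ℤ) / (m + 1 : ℕ) + q * ((m - 1 - a + 1 : ℕ) : ℤ) / (m + 1 : ℕ)
        = q - 1 := by
    intro a ha
    have ha : a < m := Finset.mem_range.mp ha
    have hnd : ¬ ((m + 1 : ℕ) : ℤ) ∣ q * ((a + 1 : ℕ) : ℤ) := fun hdvd =>
      absurd (Int.le_of_dvd (by omega) (hpq.dvd_of_dvd_mul_left hdvd)) (by omega)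
    have hrefl : q * ((m - 1 - a + 1 : ℕ) : ℤ) = (m + 1 : ℕ) * q - q * ((a + 1 : ℕ) : ℤ) := by
      rw [show ((m - 1 - a + 1 : ℕ) : ℤ) = (m + 1 : ℕ) - (a + 1 : ℕ) by omega]
      ring
    rw [hrefl]
    exact Int.ediv_add_mul_sub_ediv_of_not_dvd (by omega) hnd q
  rw [Finset.sum_range_succ', two_mul]
  nth_rewrite 2 [← Finset.sum_range_reflect]
  rw [add_add_add_comm, ← Finset.sum_add_distrib, Finset.sum_congr rfl hpair]
  simp only [Finset.sum_const, Finset.card_range, CharP.cast_eq_zero, mul_zero, Int.zero_ediv,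
    add_zero, nsmul_eq_mul]
  push_cast
  ring

theorem sum_range_trapezoid_ediv {p : ℕ} {q : ℤ} (hp : 0 < p) (hpq : IsCoprime (p : ℤ) q)
    (Q : ℤ) :
    ∑ a ∈ Finset.range p, (p * (q + Q) - q * (a + 1)) / p = p * Q + (p - 1) * (q - 1) / 2 := by
  have hterm : ∀ a ∈ Finset.range p,
      (p * (q + Q) - q * (a + 1)) / p = Q + q * ((p - 1 - a : ℕ) : ℤ) / p := by
    intro a ha
    have ha : a < p := Finset.mem_range.mp ha
    rw [show (p * (q + Q) - q * (a + 1) : ℤ) = q * ((p - 1 - a : ℕ) : ℤ) + p * Q by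
      rw [show ((p - 1 - a : ℕ) : ℤ) = p - 1 - a by omega]; ring,
      Int.add_mul_ediv_left _ _ (by omega), add_comm]
  rw [Finset.sum_congr rfl hterm, Finset.sum_add_distrib,
    Finset.sum_range_reflect (fun a => q * (a : ℤ) / p), ← two_mul_sum_range_mul_ediv hp hpq,
    Int.mul_ediv_cancel_left _ two_ne_zero]
  simp [mul_comm]

def latticeUnderGraph (s : Finset ℕ) (f : ℕ → ℕ) : Set (ℕ × ℕ) :=
  {ij | ij.1 ∈ s ∧ ij.2 < f ij.1}

theorem latticeUnderGraph_eq_coe (s : Finset ℕ) (f : ℕ → ℕ) :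
    latticeUnderGraph s f = ↑(s.biUnion fun i => ({i} : Finset ℕ) ×ˢ Finset.range (f i)) := by
  ext ⟨i, j⟩
  simp [latticeUnderGraph, and_comm]

theorem finite_latticeUnderGraph (s : Finset ℕ) (f : ℕ → ℕ) : (latticeUnderGraph s f).Finite :=
  latticeUnderGraph_eq_coe s f ▸ Finset.finite_toSet _

theorem ncard_latticeUnderGraph (s : Finset ℕ) (f : ℕ → ℕ) :
    (latticeUnderGraph s f).ncard = ∑ i ∈ s, f i := by
  rw [latticeUnderGraph_eq_coe, Set.ncard_coe_finset, Finset.card_biUnion]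
  · simp
  · intro i _ i' _ hii'
    simp [Finset.disjoint_left, hii'.symm]

theorem exists_le_lt_of_le_lt {α : Type*} [LinearOrder α] {f : ℕ → α} {x : α} {n : ℕ}
    (h0 : f 0 ≤ x) (hn : x < f n) : ∃ k, 1 ≤ k ∧ k ≤ n ∧ f (k - 1) ≤ x ∧ x < f k := by
  classical
  have hex : ∃ k, x < f k := ⟨n, hn⟩
  have hk0 : Nat.find hex ≠ 0 := fun h => (Nat.find_spec hex).not_ge (h ▸ h0)
  refine ⟨Nat.find hex, by omega, Nat.find_min' hex hn, ?_, Nat.find_spec hex⟩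
  exact not_lt.mp (Nat.find_min hex (by omega))

open Filter Topology in
theorem closure_inter_setOf_lt_eq {E : Type*} [AddCommGroup E] [Module ℝ E]
    [TopologicalSpace E] [ContinuousSMul ℝ E] {K : Set E} (hK : IsClosed K)
    (hK0 : StarConvex ℝ 0 K) (f : E →L[ℝ] ℝ) {c : ℝ} (hc : 0 < c) :
    closure (K ∩ {x | f x < c}) = K ∩ {x | f x ≤ c} := by
  refine (closure_minimal (inter_subset_inter_right _ fun x hx => le_of_lt hx)
    (hK.inter (isClosed_le f.continuous continuous_const))).antisymm ?_
  rintro x ⟨hxK, hxc : f x ≤ c⟩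
  have hcont : Continuous fun t : ℝ => t • x := continuous_id.smul continuous_const
  have hlim : Tendsto (fun t : ℝ => t • x) (𝓝[<] 1) (𝓝 x) := by
    simpa using (hcont.tendsto 1).mono_left nhdsWithin_le_nhds
  refine mem_closure_of_tendsto hlim ?_
  filter_upwards [Ioo_mem_nhdsLT one_pos] with t ⟨ht0, ht1⟩
  refine ⟨hK0.smul_mem hxK ht0.le ht1.le, ?_⟩
  show f (t • x) < c
  rw [f.map_smul, smul_eq_mul]
  nlinarith

namespace NewtonDiagram

def width (P : ℕ → ℤ) (k : ℕ) : ℤ := P k - P (k - 1)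

def height (Q : ℕ → ℤ) (k : ℕ) : ℤ := Q (k - 1) - Q k

/-- With `width P k = pₖ` and `height Q k = qₖ`, the `k`-th edge, from `(Pₖ₋₁, Qₖ₋₁)` to
`(Pₖ, Qₖ)`, lies on the line `qₖ x + pₖ y = level P Q k`. -/
def level (P Q : ℕ → ℤ) (k : ℕ) : ℤ := height Q k * P k + width P k * Q k

theorem width_succ (P : ℕ → ℤ) (k : ℕ) : width P (k + 1) = P (k + 1) - P k := by
  simp [width]

theorem height_succ (Q : ℕ → ℤ) (k : ℕ) : height Q (k + 1) = Q k - Q (k + 1) := by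
  simp [height]

structure IsNewtonDiagram (n : ℕ) (P Q : ℕ → ℤ) : Prop where
  P_zero : P 0 = 0
  Q_last : Q n = 0
  width_pos : ∀ k, 1 ≤ k → k ≤ n → 0 < width P k
  height_pos : ∀ k, 1 ≤ k → k ≤ n → 0 < height Q k
  slope_le : ∀ k l, 1 ≤ k → k ≤ l → l ≤ n → height Q l * width P k ≤ height Q k * width P l

def BelowSomeEdge (n : ℕ) (P Q : ℕ → ℤ) (x y : ℤ) : Prop :=
  ∃ k, 1 ≤ k ∧ k ≤ n ∧ height Q k * x + width P k * y ≤ level P Q k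

def columnHeight (P Q : ℕ → ℤ) (k i : ℕ) : ℕ :=
  ((level P Q k - height Q k * (i + 1)) / width P k).toNat

def edgeForm (P Q : ℕ → ℤ) (k : ℕ) : ℝ × ℝ →L[ℝ] ℝ :=
  (height Q k : ℝ) • ContinuousLinearMap.fst ℝ ℝ ℝ +
    (width P k : ℝ) • ContinuousLinearMap.snd ℝ ℝ ℝ

@[simp]
theorem edgeForm_apply (P Q : ℕ → ℤ) (k : ℕ) (w : ℝ × ℝ) :
    edgeForm P Q k w = height Q k * w.1 + width P k * w.2 := by
  simp [edgeForm]

variable {n : ℕ} {P Q : ℕ → ℤ}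

theorem isNewtonDiagram_of (hP0 : P 0 = 0) (hQn : Q n = 0)
    (hPmono : ∀ i < n, P i < P (i + 1)) (hQmono : ∀ i < n, Q (i + 1) < Q i)
    (hconv : ∀ i, 1 ≤ i → i < n →
      ((Q (i - 1) - Q i : ℤ) : ℚ) / ((P i - P (i - 1) : ℤ) : ℚ) >
        ((Q i - Q (i + 1) : ℤ) : ℚ) / ((P (i + 1) - P i : ℤ) : ℚ)) :
    IsNewtonDiagram n P Q := by
  have width_pos : ∀ k, 1 ≤ k → k ≤ n → 0 < width P k := by
    rintro (_ | k) hk1 hkn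
    · omega
    · have := hPmono k (by omega)
      rw [width_succ]; omega
  have height_pos : ∀ k, 1 ≤ k → k ≤ n → 0 < height Q k := by
    rintro (_ | k) hk1 hkn
    · omega
    · have := hQmono k (by omega)
      rw [height_succ]; omega
  have slope_anti : AntitoneOn (fun k => (height Q k : ℚ) / width P k) (Icc 1 n) :=
    antitoneOn_of_add_one_le ordConnected_Icc fun k _ hk hk' => by
      have := hconv k hk.1 (by have := hk'.2; omega)
      simp only [height_succ, width_succ]
      exact_mod_cast this.le
  refine ⟨hP0, hQn, width_pos, height_pos, fun k l hk1 hkl hln => ?_⟩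
  have hk : (0 : ℚ) < width P k := by exact_mod_cast width_pos k hk1 (by omega)
  have hl : (0 : ℚ) < width P l := by exact_mod_cast width_pos l (by omega) hln
  have := slope_anti ⟨hk1, by omega⟩ ⟨by omega, hln⟩ hkl
  rw [div_le_div_iff₀ hl hk] at this
  exact_mod_cast this

namespace IsNewtonDiagram

theorem P_monotoneOn (h : IsNewtonDiagram n P Q) : MonotoneOn P (Icc 0 n) :=
  monotoneOn_of_le_add_one ordConnected_Icc fun k _ _ hk => by
    have := h.width_pos (k + 1) (by omega) hk.2
    rw [width_succ] at this; omega

theorem Q_antitoneOn (h : IsNewtonDiagram n P Q) : AntitoneOn Q (Icc 0 n) :=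
  antitoneOn_of_add_one_le ordConnected_Icc fun k _ _ hk => by
    have := h.height_pos (k + 1) (by omega) hk.2
    rw [height_succ] at this; omega

theorem P_nonneg (h : IsNewtonDiagram n P Q) {k : ℕ} (hk : k ≤ n) : 0 ≤ P k :=
  h.P_zero ▸ h.P_monotoneOn ⟨le_rfl, Nat.zero_le n⟩ ⟨Nat.zero_le k, hk⟩ (Nat.zero_le k)

theorem Q_nonneg (h : IsNewtonDiagram n P Q) {k : ℕ} (hk : k ≤ n) : 0 ≤ Q k :=
  h.Q_last ▸ h.Q_antitoneOn ⟨Nat.zero_le k, hk⟩ ⟨Nat.zero_le n, le_rfl⟩ hk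

theorem level_pos (h : IsNewtonDiagram n P Q) {k : ℕ} (hk1 : 1 ≤ k) (hkn : k ≤ n) :
    0 < level P Q k := by
  have hP : 0 < P k := by
    have := h.width_pos k hk1 hkn
    have := h.P_nonneg (k := k - 1) (by omega)
    rw [width] at *; omega
  have := mul_pos (h.height_pos k hk1 hkn) hP
  have := mul_nonneg (h.width_pos k hk1 hkn).le (h.Q_nonneg hkn)
  rw [level]; omega

/-- Every vertex lies on or above every edge line: along the polygon, the value of the `m`-th
edge form decreases up to the `m`-th edge and increases after it, by convexity. -/
theorem level_le (h : IsNewtonDiagram n P Q) {m k : ℕ} (hm1 : 1 ≤ m) (hmn : m ≤ n)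
    (hkn : k ≤ n) : level P Q m ≤ height Q m * P k + width P m * Q k := by
  set d : ℕ → ℤ := fun k => height Q m * P k + width P m * Q k
  have hstep : ∀ a,
      d (a + 1) - d a = height Q m * width P (a + 1) - width P m * height Q (a + 1) := by
    intro a; simp only [d, width_succ, height_succ]; ring
  rcases le_or_gt k m with hkm | hmk
  · have hanti : AntitoneOn d (Icc 0 m) :=
      antitoneOn_of_add_one_le ordConnected_Icc fun a _ _ ha => by
        have := h.slope_le (a + 1) m (by omega) ha.2 hmn
        linarith [hstep a]
    exact hanti ⟨Nat.zero_le k, hkm⟩ ⟨Nat.zero_le m, le_rfl⟩ hkm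
  · have hmono : MonotoneOn d (Icc (m - 1) n) :=
      monotoneOn_of_le_add_one ordConnected_Icc fun a _ ha ha' => by
        have := h.slope_le m (a + 1) hm1 (by have := ha.1; omega) ha'.2
        linarith [hstep a]
    have hd : d (m - 1) = level P Q m := by
      simp only [d, level, width, height]; ring
    exact hd ▸ hmono ⟨le_rfl, by omega⟩ ⟨by omega, hkn⟩ (by omega)

/-- Over the column range of the `k`-th edge its line lies above every other edge line: the
difference of two lines is affine in `x` and, by `level_le`, nonpositive at both ends. -/
theorem le_level_of_le_level (h : IsNewtonDiagram n P Q) {k m : ℕ} (hk1 : 1 ≤ k)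
    (hkn : k ≤ n)
    (hm1 : 1 ≤ m) (hmn : m ≤ n) {x y : ℤ} (hx1 : P (k - 1) ≤ x) (hx2 : x ≤ P k)
    (hm : height Q m * x + width P m * y ≤ level P Q m) :
    height Q k * x + width P k * y ≤ level P Q k := by
  have hstart := h.level_le hm1 hmn (k := k - 1) (by omega)
  have hend := h.level_le hm1 hmn hkn
  have haffine : width P k * (level P Q m - height Q m * x)
        - width P m * (level P Q k - height Q k * x)
      = (P k - x) * (level P Q m - (height Q m * P (k - 1) + width P m * Q (k - 1)))
        + (x - P (k - 1)) * (level P Q m - (height Q m * P k + width P m * Q k)) := by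
    simp only [level, width, height]; ring
  have hpk := h.width_pos k hk1 hkn
  have hpm := h.width_pos m hm1 hmn
  have hcmp : width P k * (level P Q m - height Q m * x)
      ≤ width P m * (level P Q k - height Q k * x) := by
    rw [← sub_nonpos, haffine]
    exact add_nonpos (mul_nonpos_of_nonneg_of_nonpos (by linarith) (by linarith))
      (mul_nonpos_of_nonneg_of_nonpos (by linarith) (by linarith))
  have hy : width P m * (width P k * y) ≤ width P m * (level P Q k - height Q k * x) :=
    calc width P m * (width P k * y) = width P k * (width P m * y) := by ring
      _ ≤ width P k * (level P Q m - height Q m * x) :=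
        mul_le_mul_of_nonneg_left (by linarith) hpk.le
      _ ≤ width P m * (level P Q k - height Q k * x) := hcmp
  linarith [le_of_mul_le_mul_left hy hpm]

theorem edgeForm_nonneg (h : IsNewtonDiagram n P Q) {k : ℕ} (hk1 : 1 ≤ k) (hkn : k ≤ n)
    {w : ℝ × ℝ} (hw : w ∈ Ici 0 ×ˢ Ici 0) : 0 ≤ edgeForm P Q k w := by
  have hq : (0 : ℝ) ≤ height Q k := by exact_mod_cast (h.height_pos k hk1 hkn).le
  have hp : (0 : ℝ) ≤ width P k := by exact_mod_cast (h.width_pos k hk1 hkn).le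
  rw [edgeForm_apply]
  exact add_nonneg (mul_nonneg hq hw.1) (mul_nonneg hp hw.2)

theorem mem_convexHull_add_iff (h : IsNewtonDiagram n P Q) {w : ℝ × ℝ}
    (hw : w ∈ Ici 0 ×ˢ Ici 0) :
    w ∈ convexHull ℝ {x : ℝ × ℝ | ∃ i ≤ n, x = ((P i : ℝ), (Q i : ℝ))} + Ici 0 ×ˢ Ici 0 ↔
      ∀ k, 1 ≤ k → k ≤ n → (level P Q k : ℝ) ≤ edgeForm P Q k w := by
  set V := {x : ℝ × ℝ | ∃ i ≤ n, x = ((P i : ℝ), (Q i : ℝ))}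
  constructor
  · rintro ⟨v, hv, u, hu, rfl⟩ k hk1 hkn
    have hV : V ⊆ {z | (level P Q k : ℝ) ≤ edgeForm P Q k z} := by
      rintro _ ⟨i, hi, rfl⟩
      simpa using (Int.cast_le (R := ℝ)).2 (h.level_le hk1 hkn hi)
    have hv' := convexHull_min hV (convex_halfSpace_ge (edgeForm P Q k).isLinear _) hv
    rw [map_add]
    linarith [h.edgeForm_nonneg hk1 hkn hu, show (level P Q k : ℝ) ≤ edgeForm P Q k v from hv']
  · intro hlev
    rcases le_or_gt (P n : ℝ) w.1 with hlast | hlt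
    · refine ⟨_, subset_convexHull ℝ V ⟨n, le_rfl, rfl⟩, _, ?_, add_sub_cancel _ w⟩
      exact ⟨sub_nonneg.2 hlast, by simpa [h.Q_last] using hw.2⟩
    obtain ⟨k, hk1, hkn, hk0, hk⟩ := exists_le_lt_of_le_lt (f := fun k => (P k : ℝ))
      (x := w.1) (n := n) (by simpa [h.P_zero] using hw.1) hlt
    have hp : (0 : ℝ) < width P k := by exact_mod_cast h.width_pos k hk1 hkn
    have hpk : (width P k : ℝ) = P k - P (k - 1) := by simp [width]
    set a := (P k - w.1) / width P k
    set b := (w.1 - P (k - 1)) / width P k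
    set z := a • ((P (k - 1) : ℝ), (Q (k - 1) : ℝ)) + b • ((P k : ℝ), (Q k : ℝ))
    have hstart : ((P (k - 1) : ℝ), (Q (k - 1) : ℝ)) ∈ V := ⟨k - 1, by omega, rfl⟩
    have hend : ((P k : ℝ), (Q k : ℝ)) ∈ V := ⟨k, hkn, rfl⟩
    have hz : z ∈ convexHull ℝ V :=
      segment_subset_convexHull hstart hend
        ⟨a, b, div_nonneg (by linarith) hp.le, div_nonneg (by linarith) hp.le,
          by simp only [a, b]; rw [← add_div, div_eq_one_iff_eq hp.ne']; linarith, rfl⟩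
    have hz1 : (w - z).1 = 0 := by
      simp only [z, a, b, Prod.fst_sub, Prod.fst_add, Prod.smul_fst, smul_eq_mul]
      field_simp
      rw [hpk]; ring
    have hz2 : (w - z).2 = (edgeForm P Q k w - level P Q k) / width P k := by
      simp only [z, a, b, Prod.snd_sub, Prod.snd_add, Prod.smul_snd, smul_eq_mul, edgeForm_apply]
      field_simp
      simp only [level, width, height]; push_cast; ring
    refine ⟨z, hz, w - z, ⟨?_, ?_⟩, add_sub_cancel z w⟩
    · simp [hz1]
    · rw [mem_Ici, hz2]
      exact div_nonneg (by linarith [hlev k hk1 hkn]) hp.le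

theorem gammaMinus_eq (h : IsNewtonDiagram n P Q) :
    gammaMinus n P Q =
      ⋃ k ∈ Finset.Icc 1 n, (Ici 0 ×ˢ Ici 0) ∩ {w | edgeForm P Q k w ≤ level P Q k} := by
  have hdiff : (Ici 0 ×ˢ Ici 0) \
      (convexHull ℝ {x : ℝ × ℝ | ∃ i ≤ n, x = ((P i : ℝ), (Q i : ℝ))} + Ici 0 ×ˢ Ici 0)
      = ⋃ k ∈ Finset.Icc 1 n, (Ici 0 ×ˢ Ici 0) ∩ {w | edgeForm P Q k w < level P Q k} := by
    ext w
    simp only [mem_sdiff, mem_iUnion₂, mem_inter_iff, mem_ofPred_eq, Finset.mem_Icc,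
      exists_prop]
    constructor
    · rintro ⟨hw, hnot⟩
      rw [h.mem_convexHull_add_iff hw] at hnot
      simp only [not_forall, not_le, exists_prop] at hnot
      obtain ⟨k, hk1, hkn, hlt⟩ := hnot
      exact ⟨k, ⟨hk1, hkn⟩, hw, hlt⟩
    · rintro ⟨k, ⟨hk1, hkn⟩, hw, hlt⟩
      exact ⟨hw, fun hmem => ((h.mem_convexHull_add_iff hw).1 hmem k hk1 hkn).not_gt hlt⟩
  rw [gammaMinus, hdiff, Finset.closure_biUnion]
  refine iUnion₂_congr fun k hk => ?_
  rw [Finset.mem_Icc] at hk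
  exact closure_inter_setOf_lt_eq (isClosed_Ici.prod isClosed_Ici)
    ((convex_Ici 0).prod (convex_Ici 0) |>.starConvex ⟨self_mem_Ici, self_mem_Ici⟩) _
    (by exact_mod_cast h.level_pos hk.1 hk.2)

theorem unitSq_subset_gammaMinus_iff (h : IsNewtonDiagram n P Q) (i j : ℕ) :
    unitSq i j ⊆ gammaMinus n P Q ↔ BelowSomeEdge n P Q (i + 1) (j + 1) := by
  simp only [h.gammaMinus_eq, BelowSomeEdge]
  constructor
  · intro hsub
    have hcorner : (((i : ℤ) : ℝ) + 1, ((j : ℤ) : ℝ) + 1) ∈ unitSq i j :=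
      ⟨⟨by linarith, le_rfl⟩, ⟨by linarith, le_rfl⟩⟩
    obtain ⟨k, hk, -, hle⟩ := mem_iUnion₂.mp (hsub hcorner)
    rw [Finset.mem_Icc] at hk
    simp only [mem_ofPred_eq, edgeForm_apply] at hle
    exact ⟨k, hk.1, hk.2, by exact_mod_cast hle⟩
  · rintro ⟨k, hk1, hkn, hle⟩ w ⟨⟨hw1, hw2⟩, hw3, hw4⟩
    have hw : w ∈ Ici 0 ×ˢ Ici 0 :=
      ⟨mem_Ici.2 (le_trans (by positivity) hw1), mem_Ici.2 (le_trans (by positivity) hw3)⟩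
    refine mem_iUnion₂.mpr ⟨k, Finset.mem_Icc.mpr ⟨hk1, hkn⟩, hw, ?_⟩
    have hle' : (height Q k : ℝ) * ((i : ℤ) + 1 : ℝ) + width P k * ((j : ℤ) + 1 : ℝ)
        ≤ level P Q k := by exact_mod_cast hle
    have hq : (0 : ℝ) ≤ height Q k := by exact_mod_cast (h.height_pos k hk1 hkn).le
    have hp : (0 : ℝ) ≤ width P k := by exact_mod_cast (h.width_pos k hk1 hkn).le
    simp only [mem_ofPred_eq, edgeForm_apply]
    linarith [mul_le_mul_of_nonneg_left hw2 hq, mul_le_mul_of_nonneg_left hw4 hp]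

theorem lt_columnHeight_iff (h : IsNewtonDiagram n P Q) {k : ℕ} (hk1 : 1 ≤ k) (hkn : k ≤ n)
    (i j : ℕ) :
    j < columnHeight P Q k i ↔
      height Q k * (i + 1) + width P k * (j + 1) ≤ level P Q k := by
  rw [columnHeight, Int.lt_toNat, Int.lt_iff_add_one_le,
    Int.le_ediv_iff_mul_le (h.width_pos k hk1 hkn)]
  constructor <;> intro <;> linarith

theorem setOf_belowSomeEdge_eq_biUnion (h : IsNewtonDiagram n P Q) :
    {ij : ℕ × ℕ | BelowSomeEdge n P Q (ij.1 + 1) (ij.2 + 1)}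
      = ⋃ k ∈ (Finset.Icc 1 n : Set ℕ),
          latticeUnderGraph (Finset.Ico (P (k - 1)).toNat (P k).toNat) (columnHeight P Q k) := by
  ext ⟨i, j⟩
  simp only [latticeUnderGraph, mem_ofPred_eq, mem_iUnion, Finset.coe_Icc, mem_Icc,
    Finset.mem_Ico, exists_prop]
  constructor
  · rintro ⟨m, hm1, hmn, hm⟩
    have hlast := h.level_le hm1 hmn le_rfl
    rw [h.Q_last, mul_zero, add_zero] at hlast
    have hi : (i : ℤ) + 1 < P n := lt_of_mul_lt_mul_left (by nlinarith [h.width_pos m hm1 hmn])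
      (h.height_pos m hm1 hmn).le
    obtain ⟨k, hk1, hkn, hk⟩ :=
      exists_le_lt_of_le_lt (f := P) (x := (i : ℤ)) (n := n) (by simp [h.P_zero]) (by omega)
    refine ⟨k, ⟨hk1, hkn⟩, by omega, (h.lt_columnHeight_iff hk1 hkn i j).2 ?_⟩
    exact h.le_level_of_le_level hk1 hkn hm1 hmn (by omega) (by omega) hm
  · rintro ⟨k, ⟨hk1, hkn⟩, -, hj⟩
    exact ⟨k, hk1, hkn, (h.lt_columnHeight_iff hk1 hkn i j).1 hj⟩

theorem sum_columnHeight_eq (h : IsNewtonDiagram n P Q) {k : ℕ} (hk1 : 1 ≤ k) (hkn : k ≤ n)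
    (hcop : IsCoprime (width P k) (height Q k)) :
    ∑ i ∈ Finset.Ico (P (k - 1)).toNat (P k).toNat, (columnHeight P Q k i : ℤ)
      = width P k * Q k + (width P k - 1) * (height Q k - 1) / 2 := by
  obtain ⟨w, hw⟩ : ∃ w : ℕ, (w : ℤ) = width P k :=
    ⟨_, Int.toNat_of_nonneg (h.width_pos k hk1 hkn).le⟩
  have hw0 : 0 < w := by have := h.width_pos k hk1 hkn; omega
  have hstart : ((P (k - 1)).toNat : ℤ) = P (k - 1) :=
    Int.toNat_of_nonneg (h.P_nonneg (by omega))
  have hlen : (P k).toNat - (P (k - 1)).toNat = w := by rw [width] at hw; omega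
  have hterm : ∀ a ∈ Finset.range w,
      (columnHeight P Q k ((P (k - 1)).toNat + a) : ℤ)
        = (w * (height Q k + Q k) - height Q k * (a + 1)) / w := by
    intro a ha
    have ha : a < w := Finset.mem_range.mp ha
    have hnum : level P Q k - height Q k * (((P (k - 1)).toNat + a : ℕ) + 1)
        = w * (height Q k + Q k) - height Q k * (a + 1) := by
      push_cast [hstart, hw]; simp only [level, width]; ring
    have hnonneg : 0 ≤ w * (height Q k + Q k) - height Q k * (a + 1) := by
      nlinarith [h.height_pos k hk1 hkn, h.Q_nonneg hkn]
    rw [columnHeight, ← hw, hnum, Int.toNat_of_nonneg (Int.ediv_nonneg hnonneg (by omega))]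
  rw [Finset.sum_Ico_eq_sum_range, hlen, ← hw, Finset.sum_congr rfl hterm,
    sum_range_trapezoid_ediv hw0 (hw ▸ hcop)]

theorem ncard_setOf_belowSomeEdge (h : IsNewtonDiagram n P Q)
    (hcop : ∀ k, 1 ≤ k → k ≤ n → IsCoprime (width P k) (height Q k)) :
    ({ij : ℕ × ℕ | BelowSomeEdge n P Q (ij.1 + 1) (ij.2 + 1)}.ncard : ℤ)
      = ∑ k ∈ Finset.Icc 1 n, (width P k * Q k + (width P k - 1) * (height Q k - 1) / 2) := by
  have hdisj : (Finset.Icc 1 n : Set ℕ).PairwiseDisjoint fun k =>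
      latticeUnderGraph (Finset.Ico (P (k - 1)).toNat (P k).toNat) (columnHeight P Q k) := by
    intro k hk l hl hkl
    wlog hlt : k < l generalizing k l
    · exact (this hl hk hkl.symm (by omega)).symm
    simp only [Finset.coe_Icc, mem_Icc] at hk hl
    have := h.P_monotoneOn ⟨Nat.zero_le k, hk.2⟩ ⟨Nat.zero_le (l - 1), by omega⟩
      (show k ≤ l - 1 by omega)
    rw [Function.onFun, Set.disjoint_left]
    rintro ⟨i, j⟩ ⟨hik, -⟩ ⟨hil, -⟩
    simp only [Finset.mem_Ico] at hik hil
    omega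
  rw [h.setOf_belowSomeEdge_eq_biUnion, Set.Finite.ncard_biUnion (Finset.finite_toSet _)
    (fun k _ => finite_latticeUnderGraph _ _) hdisj,
    finsum_mem_coe_finset, Nat.cast_sum]
  refine Finset.sum_congr rfl fun k hk => ?_
  rw [Finset.mem_Icc] at hk
  rw [ncard_latticeUnderGraph, Nat.cast_sum, h.sum_columnHeight_eq hk.1 hk.2 (hcop k hk.1 hk.2)]

end IsNewtonDiagram
end NewtonDiagram

theorem num_squares_in_gammaMinus_general (n : ℕ) (P Q : ℕ → ℤ)
    (hP0 : P 0 = 0) (hQn : Q n = 0)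
    (hPmono : ∀ i < n, P i < P (i + 1))
    (hQmono : ∀ i < n, Q (i + 1) < Q i)
    (hconv : ∀ i, 1 ≤ i → i < n →
      ((Q (i - 1) - Q i : ℤ) : ℚ) / ((P i - P (i - 1) : ℤ) : ℚ) >
        ((Q i - Q (i + 1) : ℤ) : ℚ) / ((P (i + 1) - P i : ℤ) : ℚ))
    (hgcd : ∀ i, 1 ≤ i → i ≤ n → Int.gcd (P i - P (i - 1)) (Q (i - 1) - Q i) = 1) :
    ({ij : ℕ × ℕ | unitSq ij.1 ij.2 ⊆ gammaMinus n P Q}.ncard : ℤ) =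
      (∑ i ∈ Finset.Icc 1 n,
        (P i - P (i - 1) - 1) * (Q (i - 1) - Q i - 1) / 2) +
      ∑ i ∈ Finset.Icc 1 (n - 1), (P i - P (i - 1)) * Q i := by
  have h := NewtonDiagram.isNewtonDiagram_of hP0 hQn hPmono hQmono hconv
  have hsquares : {ij : ℕ × ℕ | unitSq ij.1 ij.2 ⊆ gammaMinus n P Q}
      = {ij | NewtonDiagram.BelowSomeEdge n P Q (ij.1 + 1) (ij.2 + 1)} :=
    Set.ext fun ij => h.unitSq_subset_gammaMinus_iff ij.1 ij.2
  have hlast : ∑ k ∈ Finset.Icc 1 n, NewtonDiagram.width P k * Q k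
      = ∑ k ∈ Finset.Icc 1 (n - 1), NewtonDiagram.width P k * Q k := by
    cases n with
    | zero => rfl
    | succ m => simp [Finset.sum_Icc_succ_top, hQn]
  rw [hsquares, h.ncard_setOf_belowSomeEdge fun k hk1 hkn =>
      Int.isCoprime_iff_gcd_eq_one.mpr (hgcd k hk1 hkn),
    Finset.sum_add_distrib, hlast, add_comm]
  rfl

/-- For a Newton diagram datum with `gcd(pᵢ,qᵢ) = 1`, the number of unit lattice squares
with nonnegative-integer corner contained in `Γ₋` equals
`Σ_{i=1}^{n} (pᵢ-1)(qᵢ-1)/2 + Σ_{i=1}^{n-1} pᵢQᵢ`. -/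
theorem num_squares_in_gammaMinus (n : ℕ) (hn : 1 ≤ n) (P Q : ℕ → ℤ)
    (hP0 : P 0 = 0) (hQn : Q n = 0)
    (hPmono : ∀ i < n, P i < P (i + 1))
    (hQmono : ∀ i < n, Q (i + 1) < Q i)
    (hconv : ∀ i, 1 ≤ i → i < n →
      ((Q (i - 1) - Q i : ℤ) : ℚ) / ((P i - P (i - 1) : ℤ) : ℚ) >
        ((Q i - Q (i + 1) : ℤ) : ℚ) / ((P (i + 1) - P i : ℤ) : ℚ))
    (hgcd : ∀ i, 1 ≤ i → i ≤ n → Int.gcd (P i - P (i - 1)) (Q (i - 1) - Q i) = 1) :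
    ({ij : ℕ × ℕ | unitSq ij.1 ij.2 ⊆ gammaMinus n P Q}.ncard : ℤ) =
      (∑ i ∈ Finset.Icc 1 n,
        (P i - P (i - 1) - 1) * (Q (i - 1) - Q i - 1) / 2) +
      ∑ i ∈ Finset.Icc 1 (n - 1), (P i - P (i - 1)) * Q i :=
  num_squares_in_gammaMinus_general n P Q hP0 hQn hPmono hQmono hconv hgcd
end

section
/- Fix a Newton diagram datum: an integer n ≥ 1 and lattice points (P₀,Q₀),…,(Pₙ,Qₙ) ∈ ℤ² with P₀ = 0, Qₙ = 0, P₀ < P₁ < … < Pₙ, Q₀ > Q₁ > … > Qₙ, pᵢ = Pᵢ − Pᵢ₋₁, qᵢ = Qᵢ₋₁ − Qᵢ, q₁/p₁ > … > qₙ/pₙ, and gcd(pᵢ,qᵢ) = 1 for each i. Let Γ₋ be the closure of (ℝ≥0)² \ (conv{(P₀,Q₀),…,(Pₙ,Qₙ)} + (ℝ≥0)²). Then the number of lattice points in the topological interior of Γ₋ equals Σ_{i=1}^{n} (pᵢ−1)(qᵢ−1)/2 + Σ_{i=1}^{n−1} pᵢQᵢ − (n−1). -/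
open Set MeasureTheory Pointwise

/-!
The `i`-th edge of the Newton polygon lies on the line `qᵢ x + pᵢ y = cᵢ` with
`cᵢ = qᵢ Pᵢ + pᵢ Qᵢ`, and by convexity every vertex lies on or above each of these lines.
Hence `int Γ₋` is the set of points with positive coordinates lying strictly below at least
one edge line. Over a column `x = a` with `P_{j-1} < a ≤ P_j` the edge line `j` is the
highest one, so the column contains `⌊(c_j - q_j a - 1) / p_j⌋` lattice points (or none).
Writing `a = P_j - s`, this is `Q_j + ⌊q_j s / p_j⌋` for `0 < s < p_j` and `Q_j - 1` for `s = 0`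
(none if `Q_j = 0`). Since `p_j, q_j` are coprime, pairing `s` with `p_j - s` gives the
classical count `∑_{0<s<p} ⌊q s / p⌋ = (p - 1)(q - 1)/2`, which finishes the computation.
-/

namespace Int

theorem sub_one_ediv_of_not_dvd {p x : ℤ} (hp : 0 < p) (hx : ¬ p ∣ x) :
    (x - 1) / p = x / p := by
  have hx' : x % p ≠ 0 := fun h0 => hx (Int.dvd_of_emod_eq_zero h0)
  have := Int.mul_ediv_add_emod x p
  have := Int.emod_nonneg x hp.ne'
  have := Int.emod_lt_of_pos x hp
  exact ((Int.ediv_emod_unique hp).2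
    ⟨(by omega : x % p - 1 + p * (x / p) = x - 1), by omega, by omega⟩).1

theorem ediv_add_neg_ediv_of_not_dvd {p x : ℤ} (hp : 0 < p) (hx : ¬ p ∣ x) :
    x / p + -x / p = -1 := by
  rw [Int.neg_ediv, if_neg hx, Int.sign_eq_one_of_pos hp]
  ring

theorem sum_Ico_mul_ediv_of_isCoprime {p q : ℤ} (hp : 0 < p) (hpq : IsCoprime p q) :
    ∑ s ∈ Finset.Ico 1 p, q * s / p = (p - 1) * (q - 1) / 2 := by
  have hpair : ∀ s ∈ Finset.Ico 1 p, q * s / p + q * (p - s) / p = q - 1 := by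
    intro s hs
    rw [Finset.mem_Ico] at hs
    have hndvd : ¬ p ∣ q * s := fun hdvd => by
      have := Int.le_of_dvd (by omega) (hpq.dvd_of_dvd_mul_left hdvd)
      omega
    rw [show q * (p - s) = -(q * s) + q * p by ring, Int.add_mul_ediv_right _ _ hp.ne',
      ← add_assoc, ediv_add_neg_ediv_of_not_dvd hp hndvd]
    ring
  have hreflect : ∑ s ∈ Finset.Ico 1 p, q * (p - s) / p = ∑ s ∈ Finset.Ico 1 p, q * s / p :=
    Finset.sum_nbij' (p - ·) (p - ·) (by intro s hs; simp only [Finset.mem_Ico] at *; omega)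
      (by intro s hs; simp only [Finset.mem_Ico] at *; omega) (by intro s _; ring_nf)
      (by intro s _; ring_nf) (by intro s _; ring_nf)
  have htwice : 2 * ∑ s ∈ Finset.Ico 1 p, q * s / p = (p - 1) * (q - 1) := by
    rw [two_mul]
    nth_rewrite 2 [← hreflect]
    rw [← Finset.sum_add_distrib, Finset.sum_congr rfl hpair, Finset.sum_const, Int.card_Ico,
      nsmul_eq_mul, Int.toNat_of_nonneg (by omega)]
  omega

theorem sum_Ioc_toNat_ediv_of_isCoprime {p q m r : ℤ} (hp : 0 < p) (hq : 0 ≤ q)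
    (hm : 0 ≤ m) (hpq : IsCoprime p q) :
    ∑ a ∈ Finset.Ioc (r - p) r, (((p * m + q * (r - a) - 1) / p).toNat : ℤ) =
      (p - 1) * (q - 1) / 2 + (p - 1) * m + (m - 1).toNat := by
  rw [← Finset.Ioo_insert_right (by omega), Finset.sum_insert (by simp)]
  have hreindex : ∑ a ∈ Finset.Ioo (r - p) r, (((p * m + q * (r - a) - 1) / p).toNat : ℤ) =
      ∑ s ∈ Finset.Ico 1 p, (((p * m + q * s - 1) / p).toNat : ℤ) :=
    Finset.sum_nbij' (r - ·) (r - ·)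
      (by intro a ha; simp only [Finset.mem_Ioo, Finset.mem_Ico] at *; omega)
      (by intro s hs; simp only [Finset.mem_Ioo, Finset.mem_Ico] at *; omega)
      (by intro a _; ring_nf) (by intro s _; ring_nf) (by intro a _; ring_nf)
  have hcorner : (p * m + q * (r - r) - 1) / p = m - 1 := by
    rw [show p * m + q * (r - r) - 1 = (p - 1) + (m - 1) * p by ring,
      Int.add_mul_ediv_right _ _ hp.ne', Int.ediv_eq_zero_of_lt (by omega) (by omega), zero_add]
  have hinner :
      ∀ s ∈ Finset.Ico 1 p, (((p * m + q * s - 1) / p).toNat : ℤ) = m + q * s / p := by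
    intro s hs
    rw [Finset.mem_Ico] at hs
    have hndvd : ¬ p ∣ q * s := fun hdvd => by
      have := Int.le_of_dvd (by omega) (hpq.dvd_of_dvd_mul_left hdvd)
      omega
    have hnonneg : 0 ≤ q * s / p := Int.ediv_nonneg (mul_nonneg hq (by omega)) hp.le
    rw [show p * m + q * s - 1 = (q * s - 1) + m * p by ring, Int.add_mul_ediv_right _ _ hp.ne',
      sub_one_ediv_of_not_dvd hp hndvd, Int.toNat_of_nonneg (by omega)]
    ring
  rw [hreindex, hcorner, Finset.sum_congr rfl hinner, Finset.sum_add_distrib,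
    sum_Ico_mul_ediv_of_isCoprime hp hpq, Finset.sum_const, Int.card_Ico, nsmul_eq_mul,
    Int.toNat_of_nonneg (by omega : (0 : ℤ) ≤ p - 1)]
  ring

end Int

theorem mul_le_of_mem_Icc_of_mul_le_of_mul_le {α : Type*} [CommRing α] [LinearOrder α]
    [IsStrictOrderedRing α] {C D l r a : α} (ha : a ∈ Icc l r) (hl : D * l ≤ C)
    (hr : D * r ≤ C) : D * a ≤ C := by
  rcases le_total 0 D with hD | hD
  · exact (mul_le_mul_of_nonneg_left ha.2 hD).trans hr
  · exact (mul_le_mul_of_nonpos_left ha.1 hD).trans hl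

theorem exists_mem_Icc_mem_Ico_of_le_of_lt {α : Type*} [LinearOrder α] {f : ℕ → α} {n : ℕ}
    {x : α} (h0 : f 0 ≤ x) (hn : x < f n) :
    ∃ j ∈ Finset.Icc 1 n, x ∈ Ico (f (j - 1)) (f j) := by
  classical
  have hex : ∃ j, x < f j := ⟨n, hn⟩
  have hj0 : Nat.find hex ≠ 0 := fun h => (Nat.find_spec hex).not_ge (h ▸ h0)
  refine ⟨Nat.find hex, Finset.mem_Icc.2 ⟨Nat.one_le_iff_ne_zero.2 hj0, Nat.find_min' hex hn⟩,
    not_lt.1 (Nat.find_min hex (by omega)), Nat.find_spec hex⟩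

theorem Finset.sum_Ioc_eq_sum_Icc_sum_Ioc {α M : Type*} [LinearOrder α] [LocallyFiniteOrder α]
    [AddCommMonoid M] (f : α → M) {P : ℕ → α} {m : ℕ} (hP : MonotoneOn P (Set.Iic m)) :
    ∑ a ∈ Finset.Ioc (P 0) (P m), f a =
      ∑ j ∈ Finset.Icc 1 m, ∑ a ∈ Finset.Ioc (P (j - 1)) (P j), f a := by
  induction m with
  | zero => simp
  | succ m ih =>
    rw [← Finset.Ioc_union_Ioc_eq_Ioc (hP (by simp) (by simp) (Nat.zero_le m))
        (hP (by simp) (by simp) m.le_succ),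
      Finset.sum_union (Finset.Ioc_disjoint_Ioc_of_le le_rfl),
      ih (hP.mono (Set.Iic_subset_Iic.2 m.le_succ)), Finset.sum_Icc_succ_top (by omega),
      Nat.add_sub_cancel]

theorem exists_pos_add_smul_mem_of_mem_interior {E : Type*} [AddCommGroup E] [Module ℝ E]
    [TopologicalSpace E] [ContinuousAdd E] [ContinuousSMul ℝ E] {s : Set E} {z : E}
    (hz : z ∈ interior s) (v : E) : ∃ t > (0 : ℝ), z + t • v ∈ s := by
  have hcont : Filter.Tendsto (fun t : ℝ => z + t • v) (nhds 0) (nhds z) := by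
    simpa using (Continuous.tendsto (f := fun t : ℝ => z + t • v) (by fun_prop) 0)
  have hev : ∀ᶠ t in nhdsWithin (0 : ℝ) (Ioi 0), z + t • v ∈ s :=
    nhdsWithin_le_nhds (hcont (mem_interior_iff_mem_nhds.1 hz))
  obtain ⟨t, hts, ht⟩ := (hev.and self_mem_nhdsWithin).exists
  exact ⟨t, ht, hts⟩

namespace NewtonDiagram

structure IsDatum (n : ℕ) (P Q : ℕ → ℤ) : Prop where
  P_zero : P 0 = 0
  Q_last : Q n = 0
  P_lt_succ : ∀ i < n, P i < P (i + 1)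
  Q_succ_lt : ∀ i < n, Q (i + 1) < Q i
  slope_gt : ∀ i, 1 ≤ i → i < n →
    ((Q (i - 1) - Q i : ℤ) : ℚ) / ((P i - P (i - 1) : ℤ) : ℚ) >
      ((Q i - Q (i + 1) : ℤ) : ℚ) / ((P (i + 1) - P i : ℤ) : ℚ)

def p (P : ℕ → ℤ) (i : ℕ) : ℤ := P i - P (i - 1)

def q (Q : ℕ → ℤ) (i : ℕ) : ℤ := Q (i - 1) - Q i

/-- The `i`-th edge, from `(P (i - 1), Q (i - 1))` to `(P i, Q i)`, lies on the line
`q i * x + p i * y = c i`. -/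
def c (P Q : ℕ → ℤ) (i : ℕ) : ℤ := q Q i * P i + p P i * Q i

variable {n : ℕ} {P Q : ℕ → ℤ}

namespace IsDatum

variable (h : IsDatum n P Q)
include h

theorem P_strictMonoOn : StrictMonoOn P (Iic n) :=
  strictMonoOn_of_lt_add_one ordConnected_Iic fun i _ _ hi => h.P_lt_succ i hi

theorem Q_strictAntiOn : StrictAntiOn Q (Iic n) :=
  strictAntiOn_of_add_one_lt ordConnected_Iic fun i _ _ hi => h.Q_succ_lt i hi

theorem P_nonneg {i : ℕ} (hi : i ≤ n) : 0 ≤ P i :=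
  h.P_zero ▸ h.P_strictMonoOn.monotoneOn (Nat.zero_le n) hi (Nat.zero_le i)

theorem Q_nonneg {i : ℕ} (hi : i ≤ n) : 0 ≤ Q i :=
  h.Q_last ▸ h.Q_strictAntiOn.antitoneOn hi (mem_Iic.2 le_rfl) hi

theorem Q_pos {i : ℕ} (hi : i < n) : 0 < Q i :=
  h.Q_last ▸ h.Q_strictAntiOn hi.le (mem_Iic.2 le_rfl) hi

theorem p_pos {i : ℕ} (hi : 1 ≤ i) (hin : i ≤ n) : 0 < p P i :=
  sub_pos.2 (h.P_strictMonoOn (show i - 1 ≤ n by omega) hin (by omega))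

theorem q_pos {i : ℕ} (hi : 1 ≤ i) (hin : i ≤ n) : 0 < q Q i :=
  sub_pos.2 (h.Q_strictAntiOn (show i - 1 ≤ n by omega) hin (by omega))

theorem slope_antitoneOn : AntitoneOn (fun i => (q Q i : ℚ) / p P i) (Icc 1 n) :=
  antitoneOn_of_add_one_le ordConnected_Icc fun i _ hi hi1 => by
    simpa only [p, q, Nat.add_sub_cancel] using (h.slope_gt i hi.1 hi1.2).le

theorem q_mul_p_le {i k : ℕ} (hi : 1 ≤ i) (hik : i ≤ k) (hk : k ≤ n) :
    q Q k * p P i ≤ q Q i * p P k := by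
  have hslope := h.slope_antitoneOn ⟨hi, hik.trans hk⟩ ⟨hi.trans hik, hk⟩ hik
  rw [div_le_div_iff₀ (by exact_mod_cast h.p_pos (hi.trans hik) hk)
    (by exact_mod_cast h.p_pos hi (hik.trans hk))] at hslope
  exact_mod_cast hslope

/-- The function `j ↦ q i * P j + p i * Q j` decreases up to `j = i` and increases after,
because the slopes `q k / p k` of the edges decrease. -/
theorem c_le {i j : ℕ} (hi : 1 ≤ i) (hin : i ≤ n) (hj : j ≤ n) :
    c P Q i ≤ q Q i * P j + p P i * Q j := by
  set f : ℕ → ℤ := fun j => q Q i * P j + p P i * Q j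
  have hstep : ∀ k, f (k + 1) - f k = q Q i * p P (k + 1) - p P i * q Q (k + 1) := by
    intro k
    simp only [f, p, q, Nat.add_sub_cancel]
    ring
  change f i ≤ f j
  rcases le_total i j with hij | hji
  · have hmono : MonotoneOn f (Icc i n) :=
      monotoneOn_of_le_add_one ordConnected_Icc fun k _ hk hk1 => by
        linarith [hstep k, h.q_mul_p_le hi (hk.1.trans k.le_succ) hk1.2]
    exact hmono ⟨le_rfl, hin⟩ ⟨hij, hj⟩ hij
  · have hanti : AntitoneOn f (Icc 0 i) :=
      antitoneOn_of_add_one_le ordConnected_Icc fun k _ _ hk1 => by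
        linarith [hstep k, h.q_mul_p_le (Nat.succ_pos k) hk1.2 hin]
    exact hanti ⟨Nat.zero_le j, hji⟩ ⟨Nat.zero_le i, le_rfl⟩ hji

/-- Over the strip `P (j - 1) ≤ x ≤ P j`, the `j`-th edge line is the highest one. -/
theorem p_mul_c_sub_le {i j : ℕ} {a : ℤ} (hi : 1 ≤ i) (hin : i ≤ n) (hj : 1 ≤ j)
    (hjn : j ≤ n) (ha : a ∈ Icc (P (j - 1)) (P j)) :
    p P j * (c P Q i - q Q i * a) ≤ p P i * (c P Q j - q Q j * a) := by
  have hpj := (h.p_pos hj hjn).le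
  have hright := mul_le_mul_of_nonneg_left (h.c_le hi hin hjn) hpj
  have hleft := mul_le_mul_of_nonneg_left (h.c_le hi hin (show j - 1 ≤ n by omega)) hpj
  have := mul_le_of_mem_Icc_of_mul_le_of_mul_le (C := p P i * c P Q j - p P j * c P Q i)
    (D := p P i * q Q j - p P j * q Q i) ha
    (by simp only [c, p, q] at hleft ⊢; linarith) (by simp only [c, p, q] at hright ⊢; linarith)
  linarith

theorem lt_P_and_lt_Q_of_lt_c {i : ℕ} {a b : ℤ} (hi : 1 ≤ i) (hin : i ≤ n) (ha : 0 < a)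
    (hb : 0 < b) (hab : q Q i * a + p P i * b < c P Q i) : a < P n ∧ b < Q 0 := by
  have hlast := h.c_le hi hin le_rfl
  have hfirst := h.c_le hi hin (Nat.zero_le n)
  rw [h.Q_last] at hlast
  rw [h.P_zero] at hfirst
  have hp := h.p_pos hi hin
  have hq := h.q_pos hi hin
  constructor <;> nlinarith

end IsDatum

def newtonPolygon (n : ℕ) (P Q : ℕ → ℤ) : Set (ℝ × ℝ) :=
  convexHull ℝ {x : ℝ × ℝ | ∃ i ≤ n, x = ((P i : ℝ), (Q i : ℝ))} + Ici 0 ×ˢ Ici 0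

theorem gammaMinus_eq : gammaMinus n P Q = closure (Ici 0 ×ˢ Ici 0 \ newtonPolygon n P Q) := rfl

def lowerRegion (n : ℕ) (P Q : ℕ → ℤ) : Set (ℝ × ℝ) :=
  Ioi 0 ×ˢ Ioi 0 ∩ ⋃ i ∈ Finset.Icc 1 n, {z | (q Q i : ℝ) * z.1 + p P i * z.2 < c P Q i}

def closedLowerRegion (n : ℕ) (P Q : ℕ → ℤ) : Set (ℝ × ℝ) :=
  Ici 0 ×ˢ Ici 0 ∩ ⋃ i ∈ Finset.Icc 1 n, {z | (q Q i : ℝ) * z.1 + p P i * z.2 ≤ c P Q i}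

theorem isOpen_lowerRegion : IsOpen (lowerRegion n P Q) :=
  (isOpen_Ioi.prod isOpen_Ioi).inter
    (isOpen_biUnion fun _ _ => isOpen_lt (by fun_prop) continuous_const)

theorem isClosed_closedLowerRegion : IsClosed (closedLowerRegion n P Q) :=
  (isClosed_Ici.prod isClosed_Ici).inter
    ((Finset.finite_toSet _).isClosed_biUnion fun _ _ => isClosed_le (by fun_prop) continuous_const)

namespace IsDatum

variable (h : IsDatum n P Q)
include h

theorem c_le_of_mem_newtonPolygon {z : ℝ × ℝ} (hz : z ∈ newtonPolygon n P Q) {i : ℕ}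
    (hi : 1 ≤ i) (hin : i ≤ n) : (c P Q i : ℝ) ≤ q Q i * z.1 + p P i * z.2 := by
  obtain ⟨x, hx, w, ⟨hw₁, hw₂⟩, rfl⟩ := hz
  have hhull : convexHull ℝ {x : ℝ × ℝ | ∃ i ≤ n, x = ((P i : ℝ), (Q i : ℝ))} ⊆
      {x | (c P Q i : ℝ) ≤ q Q i * x.1 + p P i * x.2} := by
    refine convexHull_min ?_ (convex_halfSpace_ge ⟨fun x y => ?_, fun a x => ?_⟩ _)
    · rintro _ ⟨j, hj, rfl⟩
      show (c P Q i : ℝ) ≤ q Q i * P j + p P i * Q j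
      exact_mod_cast h.c_le hi hin hj
    · simp only [Prod.fst_add, Prod.snd_add]; ring
    · simp only [Prod.smul_fst, Prod.smul_snd, smul_eq_mul]; ring
  have hq : (0 : ℝ) ≤ q Q i := by exact_mod_cast (h.q_pos hi hin).le
  have hp : (0 : ℝ) ≤ p P i := by exact_mod_cast (h.p_pos hi hin).le
  have := hhull hx
  simp only [mem_ofPred_eq, mem_Ici, Prod.fst_add, Prod.snd_add] at this hw₁ hw₂ ⊢
  nlinarith [mul_nonneg hq hw₁, mul_nonneg hp hw₂]

theorem lowerRegion_subset : lowerRegion n P Q ⊆ Ici 0 ×ˢ Ici 0 \ newtonPolygon n P Q := by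
  rintro z ⟨⟨hz₁, hz₂⟩, hz⟩
  simp only [mem_iUnion, Finset.mem_Icc, mem_ofPred_eq, exists_prop] at hz
  obtain ⟨i, ⟨hi, hin⟩, hlt⟩ := hz
  exact ⟨⟨Ioi_subset_Ici_self hz₁, Ioi_subset_Ici_self hz₂⟩,
    fun hzN => (h.c_le_of_mem_newtonPolygon hzN hi hin).not_gt hlt⟩

/-- `z` lies above the point with the same abscissa on the edge over the strip containing
`z.1`. -/
theorem mem_newtonPolygon_of_c_le {z : ℝ × ℝ} (hz₁ : 0 ≤ z.1) (hz₂ : 0 ≤ z.2)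
    (hz : ∀ i ∈ Finset.Icc 1 n, (c P Q i : ℝ) ≤ q Q i * z.1 + p P i * z.2) :
    z ∈ newtonPolygon n P Q := by
  have hvertex : ∀ j ≤ n, ((P j : ℝ), (Q j : ℝ)) ∈
      convexHull ℝ {x : ℝ × ℝ | ∃ i ≤ n, x = ((P i : ℝ), (Q i : ℝ))} :=
    fun j hj => subset_convexHull ℝ _ ⟨j, hj, rfl⟩
  rcases le_or_gt (P n : ℝ) z.1 with hlast | hstrip
  · refine ⟨_, hvertex n le_rfl, (z.1 - P n, z.2 - Q n), ⟨?_, ?_⟩, by ext <;> simp⟩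
    · simpa using hlast
    · simpa [h.Q_last] using hz₂
  obtain ⟨j, hj, hzj₁, hzj₂⟩ :=
    exists_mem_Icc_mem_Ico_of_le_of_lt (f := fun i => (P i : ℝ)) (by simpa [h.P_zero]) hstrip
  rw [Finset.mem_Icc] at hj
  have hp : (0 : ℝ) < p P j := by exact_mod_cast h.p_pos hj.1 hj.2
  have hpP : (p P j : ℝ) = P j - P (j - 1) := by simp [p]
  have hqQ : (q Q j : ℝ) = Q (j - 1) - Q j := by simp [q]
  set t := (P j - z.1) / (p P j : ℝ)
  have ht : t ∈ Icc (0 : ℝ) 1 := by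
    constructor
    · exact div_nonneg (by linarith) hp.le
    · rw [div_le_one hp]; linarith
  have hedge := (convex_convexHull ℝ _).add_smul_sub_mem (hvertex j hj.2)
    (hvertex (j - 1) (by omega)) ht
  refine ⟨_, hedge, (0, z.2 - (Q j + t * q Q j)), ⟨mem_Ici.2 le_rfl, ?_⟩, ?_⟩
  · have hc := hz j (Finset.mem_Icc.2 hj)
    have hct : (c P Q j : ℝ) = q Q j * P j + p P j * Q j := by simp [c]
    have : (Q j : ℝ) + t * q Q j ≤ z.2 := by
      rw [← mul_le_mul_iff_of_pos_left hp]
      simp only [t]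
      field_simp
      nlinarith
    simpa using this
  · ext
    · simp only [Prod.fst_add, Prod.smul_fst, Prod.fst_sub, smul_eq_mul, add_zero, t]
      field_simp
      linear_combination ((P j : ℝ) - z.1) * hpP
    · simp only [Prod.snd_add, Prod.smul_snd, Prod.snd_sub, smul_eq_mul, hqQ]
      ring

theorem diff_newtonPolygon_subset :
    Ici 0 ×ˢ Ici 0 \ newtonPolygon n P Q ⊆ closedLowerRegion n P Q := by
  rintro z ⟨⟨hz₁, hz₂⟩, hzN⟩
  refine ⟨⟨hz₁, hz₂⟩, ?_⟩
  by_contra hz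
  simp only [mem_iUnion, mem_ofPred_eq, exists_prop, not_exists, not_and, not_le] at hz
  exact hzN (h.mem_newtonPolygon_of_c_le hz₁ hz₂ fun i hi => (hz i hi).le)

/-- Moving from an interior point in the direction `(1, 1)` stays in the closed region, and
strictly increases every edge functional. -/
theorem interior_closedLowerRegion_subset :
    interior (closedLowerRegion n P Q) ⊆ lowerRegion n P Q := by
  intro z hz
  have hpos : z ∈ Ioi 0 ×ˢ Ioi 0 := by
    have := interior_mono inter_subset_left hz
    rwa [interior_prod_eq, interior_Ici] at this
  refine ⟨hpos, ?_⟩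
  obtain ⟨t, ht, hzt⟩ := exists_pos_add_smul_mem_of_mem_interior hz (1, 1)
  obtain ⟨-, hzt⟩ := hzt
  simp only [mem_iUnion, Finset.mem_Icc, mem_ofPred_eq, exists_prop, Prod.fst_add,
    Prod.snd_add, Prod.smul_mk, smul_eq_mul, mul_one] at hzt ⊢
  obtain ⟨i, ⟨hi, hin⟩, hle⟩ := hzt
  have hp : (0 : ℝ) < p P i := by exact_mod_cast h.p_pos hi hin
  have hq : (0 : ℝ) < q Q i := by exact_mod_cast h.q_pos hi hin
  exact ⟨i, ⟨hi, hin⟩, by nlinarith⟩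

theorem interior_gammaMinus : interior (gammaMinus n P Q) = lowerRegion n P Q := by
  rw [gammaMinus_eq]
  exact subset_antisymm
    ((interior_mono (closure_minimal h.diff_newtonPolygon_subset isClosed_closedLowerRegion)).trans
      h.interior_closedLowerRegion_subset)
    (interior_maximal (h.lowerRegion_subset.trans subset_closure) isOpen_lowerRegion)

end IsDatum

open scoped Classical in
/-- The box `(0, P n] × (0, Q 0]` contains every lattice point of `lowerRegion n P Q`
(`IsDatum.lt_P_and_lt_Q_of_lt_c`). -/
noncomputable def latticePointsBelow (n : ℕ) (P Q : ℕ → ℤ) : Finset (ℤ × ℤ) :=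
  {x ∈ Finset.Ioc 0 (P n) ×ˢ Finset.Ioc 0 (Q 0) |
    ∃ i ∈ Finset.Icc 1 n, q Q i * x.1 + p P i * x.2 < c P Q i}

open scoped Classical in
noncomputable def column (n : ℕ) (P Q : ℕ → ℤ) (a : ℤ) : Finset ℤ :=
  {b ∈ Finset.Ioc 0 (Q 0) | ∃ i ∈ Finset.Icc 1 n, q Q i * a + p P i * b < c P Q i}

theorem card_latticePointsBelow_eq_sum_column :
    (latticePointsBelow n P Q).card = ∑ a ∈ Finset.Ioc 0 (P n), (column n P Q a).card := by
  simp only [latticePointsBelow, column, Finset.card_filter, Finset.sum_product]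
  congr!

namespace IsDatum

variable (h : IsDatum n P Q)
include h

theorem setOf_mem_lowerRegion_eq_image :
    {x : ℝ × ℝ | x ∈ lowerRegion n P Q ∧ ∃ a b : ℤ, x = ((a : ℝ), (b : ℝ))} =
      Prod.map (Int.cast : ℤ → ℝ) (Int.cast : ℤ → ℝ) '' latticePointsBelow n P Q := by
  ext x
  constructor
  · rintro ⟨⟨⟨ha, hb⟩, hx⟩, a, b, rfl⟩
    simp only [mem_iUnion, Finset.mem_Icc, mem_ofPred_eq, exists_prop] at hx
    obtain ⟨i, ⟨hi, hin⟩, hlt⟩ := hx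
    have ha : 0 < a := by simpa using ha
    have hb : 0 < b := by simpa using hb
    have hlt : q Q i * a + p P i * b < c P Q i := by exact_mod_cast hlt
    obtain ⟨haP, hbQ⟩ := h.lt_P_and_lt_Q_of_lt_c hi hin ha hb hlt
    refine ⟨(a, b), ?_, rfl⟩
    simp only [latticePointsBelow, Finset.coe_filter, Finset.mem_product, Finset.mem_Ioc,
      Finset.mem_Icc, mem_ofPred_eq]
    exact ⟨⟨⟨ha, haP.le⟩, hb, hbQ.le⟩, i, ⟨hi, hin⟩, hlt⟩
  · rintro ⟨⟨a, b⟩, hab, rfl⟩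
    simp only [latticePointsBelow, Finset.coe_filter, Finset.mem_product, Finset.mem_Ioc,
      Finset.mem_Icc, mem_ofPred_eq] at hab
    obtain ⟨⟨⟨ha, -⟩, hb, -⟩, i, hi, hlt⟩ := hab
    refine ⟨⟨⟨by simpa using ha, by simpa using hb⟩, ?_⟩, a, b, rfl⟩
    simp only [mem_iUnion, Finset.mem_Icc, mem_ofPred_eq, exists_prop, Prod.map_fst,
      Prod.map_snd]
    exact ⟨i, hi, by exact_mod_cast hlt⟩

theorem column_eq_Ioc {j : ℕ} {a : ℤ} (hj : 1 ≤ j) (hjn : j ≤ n)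
    (ha : a ∈ Ioc (P (j - 1)) (P j)) :
    column n P Q a = Finset.Ioc 0 ((c P Q j - q Q j * a - 1) / p P j) := by
  have hpj := h.p_pos hj hjn
  have ha0 : 0 < a := (h.P_nonneg (show j - 1 ≤ n by omega)).trans_lt ha.1
  ext b
  simp only [column, Finset.mem_filter, Finset.mem_Ioc, Int.le_ediv_iff_mul_le hpj]
  constructor
  · rintro ⟨⟨hb, -⟩, i, hi, hlt⟩
    rw [Finset.mem_Icc] at hi
    have hpi := h.p_pos hi.1 hi.2
    have hdom := h.p_mul_c_sub_le hi.1 hi.2 hj hjn (Ioc_subset_Icc_self ha)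
    have : p P i * (b * p P j) < p P i * (c P Q j - q Q j * a) := by nlinarith
    exact ⟨hb, by linarith [lt_of_mul_lt_mul_left this hpi.le]⟩
  · rintro ⟨hb, hbB⟩
    have hlt : q Q j * a + p P j * b < c P Q j := by linarith
    exact ⟨⟨hb, (h.lt_P_and_lt_Q_of_lt_c hj hjn ha0 hb hlt).2.le⟩, j,
      Finset.mem_Icc.2 ⟨hj, hjn⟩, hlt⟩

theorem sum_card_column {j : ℕ} (hj : 1 ≤ j) (hjn : j ≤ n) (hpq : IsCoprime (p P j) (q Q j)) :
    ∑ a ∈ Finset.Ioc (P (j - 1)) (P j), ((column n P Q a).card : ℤ) =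
      (p P j - 1) * (q Q j - 1) / 2 + (p P j - 1) * Q j + (Q j - 1).toNat := by
  have hP : P (j - 1) = P j - p P j := by simp [p]
  rw [← Int.sum_Ioc_toNat_ediv_of_isCoprime (r := P j) (h.p_pos hj hjn) (h.q_pos hj hjn).le
    (h.Q_nonneg hjn) hpq, ← hP]
  refine Finset.sum_congr rfl fun a ha => ?_
  rw [h.column_eq_Ioc hj hjn (by simpa using ha), Int.card_Ioc, sub_zero]
  congr 3
  simp only [c]
  ring

theorem card_latticePointsBelow_eq_sum_strips
    (hpq : ∀ j ∈ Finset.Icc 1 n, IsCoprime (p P j) (q Q j)) :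
    ((latticePointsBelow n P Q).card : ℤ) = ∑ j ∈ Finset.Icc 1 n,
      ((p P j - 1) * (q Q j - 1) / 2 + (p P j - 1) * Q j + (Q j - 1).toNat) := by
  rw [card_latticePointsBelow_eq_sum_column, Nat.cast_sum, ← h.P_zero,
    Finset.sum_Ioc_eq_sum_Icc_sum_Ioc _ h.P_strictMonoOn.monotoneOn]
  refine Finset.sum_congr rfl fun j hj => ?_
  rw [Finset.mem_Icc] at hj
  exact h.sum_card_column hj.1 hj.2 (hpq j (Finset.mem_Icc.2 hj))

/-- Only the last vertex lies on the `x`-axis, so the corner term `(Q j - 1).toNat` is `Q j - 1`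
except for `j = n`, where it vanishes. -/
theorem sum_strip_counts_eq (hn : 1 ≤ n) :
    ∑ j ∈ Finset.Icc 1 n,
        ((p P j - 1) * (q Q j - 1) / 2 + (p P j - 1) * Q j + (Q j - 1).toNat) =
      ∑ j ∈ Finset.Icc 1 n, (p P j - 1) * (q Q j - 1) / 2 +
        ∑ j ∈ Finset.Icc 1 (n - 1), p P j * Q j - ((n : ℤ) - 1) := by
  obtain ⟨m, rfl⟩ : ∃ m, n = m + 1 := ⟨n - 1, by omega⟩
  have hcorner : ∀ j ∈ Finset.Icc 1 m,
      (p P j - 1) * (q Q j - 1) / 2 + (p P j - 1) * Q j + ((Q j - 1).toNat : ℤ) =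
        (p P j - 1) * (q Q j - 1) / 2 + (p P j * Q j - 1) := by
    intro j hj
    rw [Int.toNat_of_nonneg (by linarith [h.Q_pos (Nat.lt_succ_of_le (Finset.mem_Icc.1 hj).2)])]
    ring
  rw [Finset.sum_Icc_succ_top (by omega), Finset.sum_Icc_succ_top (by omega), h.Q_last,
    Nat.add_sub_cancel, Finset.sum_congr rfl hcorner, Finset.sum_add_distrib,
    Finset.sum_sub_distrib]
  simp only [Finset.sum_const, Nat.card_Icc, add_tsub_cancel_right, Int.nsmul_eq_mul, mul_zero,
    add_zero, zero_sub, Int.reduceNeg, Int.reduceToNat, Nat.cast_zero, Nat.cast_add, Nat.cast_one]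
  ring

end IsDatum

end NewtonDiagram

/-- For a Newton diagram datum with `gcd(pᵢ,qᵢ) = 1`, the number of lattice points in the
topological interior of `Γ₋` equals
`Σ_{i=1}^{n} (pᵢ-1)(qᵢ-1)/2 + Σ_{i=1}^{n-1} pᵢQᵢ - (n-1)`. -/
theorem num_interior_lattice_points (n : ℕ) (hn : 1 ≤ n) (P Q : ℕ → ℤ)
    (hP0 : P 0 = 0) (hQn : Q n = 0)
    (hPmono : ∀ i < n, P i < P (i + 1))
    (hQmono : ∀ i < n, Q (i + 1) < Q i)
    (hconv : ∀ i, 1 ≤ i → i < n →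
      ((Q (i - 1) - Q i : ℤ) : ℚ) / ((P i - P (i - 1) : ℤ) : ℚ) >
        ((Q i - Q (i + 1) : ℤ) : ℚ) / ((P (i + 1) - P i : ℤ) : ℚ))
    (hgcd : ∀ i, 1 ≤ i → i ≤ n → Int.gcd (P i - P (i - 1)) (Q (i - 1) - Q i) = 1) :
    ({x : ℝ × ℝ | x ∈ interior (gammaMinus n P Q) ∧
        ∃ a b : ℤ, x = ((a : ℝ), (b : ℝ))}.ncard : ℤ) =
      (∑ i ∈ Finset.Icc 1 n,
        (P i - P (i - 1) - 1) * (Q (i - 1) - Q i - 1) / 2) +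
      (∑ i ∈ Finset.Icc 1 (n - 1), (P i - P (i - 1)) * Q i) - ((n : ℤ) - 1) := by
  have h : NewtonDiagram.IsDatum n P Q := ⟨hP0, hQn, hPmono, hQmono, hconv⟩
  have hpq : ∀ j ∈ Finset.Icc 1 n, IsCoprime (NewtonDiagram.p P j) (NewtonDiagram.q Q j) :=
    fun j hj => Int.isCoprime_iff_gcd_eq_one.2
      (hgcd j (Finset.mem_Icc.1 hj).1 (Finset.mem_Icc.1 hj).2)
  rw [h.interior_gammaMinus, h.setOf_mem_lowerRegion_eq_image,
    Set.ncard_image_of_injective _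
      (Prod.map_injective.2 ⟨Int.cast_injective, Int.cast_injective⟩),
    Set.ncard_coe_finset, h.card_latticePointsBelow_eq_sum_strips hpq, h.sum_strip_counts_eq hn]
  rfl
end

section
/- Fix a Newton diagram datum: an integer n ≥ 1 and lattice points (P₀,Q₀),…,(Pₙ,Qₙ) ∈ ℤ² with P₀ = 0, Qₙ = 0, P₀ < P₁ < … < Pₙ, Q₀ > Q₁ > … > Qₙ, pᵢ = Pᵢ − Pᵢ₋₁, qᵢ = Qᵢ₋₁ − Qᵢ, q₁/p₁ > … > qₙ/pₙ, and gcd(pᵢ,qᵢ) = 1 for each i. Let Γ₋ be the closure of (ℝ≥0)² \ (conv{(P₀,Q₀),…,(Pₙ,Qₙ)} + (ℝ≥0)²), and let Γ be the union of the segments from (Pᵢ₋₁,Qᵢ₋₁) to (Pᵢ,Qᵢ). Then the number of pairs (i,j) of nonnegative integers such that S(i,j) = [i,i+1] × [j,j+1] ⊆ Γ₋ and no vertex of S(i,j) lies on Γ equals the number of lattice points in the topological interior of Γ₋. -/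
open Set MeasureTheory Pointwise

/-- The four corners of the unit lattice square `S(i,j)`. -/
def unitSqVertices (i j : ℤ) : Set (ℝ × ℝ) :=
  {((i : ℝ), (j : ℝ)), ((i : ℝ) + 1, (j : ℝ)), ((i : ℝ), (j : ℝ) + 1),
    ((i : ℝ) + 1, (j : ℝ) + 1)}

/-- The Newton boundary `Γ`: the union of the segments from `(Pᵢ₋₁,Qᵢ₋₁)` to `(Pᵢ,Qᵢ)`,
`i = 1,…,n`. -/
def newtonBoundary (n : ℕ) (P Q : ℕ → ℤ) : Set (ℝ × ℝ) :=
  ⋃ i ∈ Finset.Icc 1 n,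
    segment ℝ ((P (i - 1) : ℝ), (Q (i - 1) : ℝ)) ((P i : ℝ), (Q i : ℝ))

namespace NDaux


variable {n : ℕ} {P Q : ℕ → ℤ}

lemma Pmono' (hPmono : ∀ i < n, P i < P (i + 1)) :
    ∀ s t, s < t → t ≤ n → P s < P t := by
  intro s t hst htn
  induction t with
  | zero => omega
  | succ m ih =>
    rcases Nat.lt_or_ge s m with h | h
    · exact lt_trans (ih h (by omega)) (hPmono m (by omega))
    · have hsm : s = m := by omega
      subst hsm; exact hPmono s (by omega)

lemma Qanti' (hQmono : ∀ i < n, Q (i + 1) < Q i) :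
    ∀ s t, s < t → t ≤ n → Q t < Q s := by
  intro s t hst htn
  induction t with
  | zero => omega
  | succ m ih =>
    rcases Nat.lt_or_ge s m with h | h
    · exact lt_trans (hQmono m (by omega)) (ih h (by omega))
    · have hsm : s = m := by omega
      subst hsm; exact hQmono s (by omega)

lemma crossZ (hPmono : ∀ i < n, P i < P (i + 1)) (hQmono : ∀ i < n, Q (i + 1) < Q i)
    (hconv : ∀ i, 1 ≤ i → i < n →
      ((Q (i - 1) - Q i : ℤ) : ℚ) / ((P i - P (i - 1) : ℤ) : ℚ) >
        ((Q i - Q (i + 1) : ℤ) : ℚ) / ((P (i + 1) - P i : ℤ) : ℚ)) :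
    ∀ s t, 1 ≤ s → s < t → t ≤ n →
      (P s - P (s - 1)) * (Q (t - 1) - Q t) < (Q (s - 1) - Q s) * (P t - P (t - 1)) := by
  have adj : ∀ i, 1 ≤ i → i < n →
      (P i - P (i - 1)) * (Q i - Q (i + 1)) < (Q (i - 1) - Q i) * (P (i + 1) - P i) := by
    intro i h1 h2
    have e := hconv i h1 h2
    have d1 : (0:ℚ) < ((P i - P (i - 1) : ℤ) : ℚ) := by
      have := Pmono' hPmono (i-1) i (by omega) (by omega)
      exact_mod_cast sub_pos.mpr this
    have d2 : (0:ℚ) < ((P (i + 1) - P i : ℤ) : ℚ) := by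
      have := Pmono' hPmono i (i+1) (by omega) (by omega)
      exact_mod_cast sub_pos.mpr this
    rw [gt_iff_lt, div_lt_div_iff₀ d2 d1] at e
    have e' : (Q i - Q (i + 1)) * (P i - P (i - 1)) < (Q (i - 1) - Q i) * (P (i + 1) - P i) := by exact_mod_cast e
    linarith [e', mul_comm (P i - P (i-1)) (Q i - Q (i+1))]
  intro s t h1 hst htn
  induction t with
  | zero => omega
  | succ m ih =>
    have hred : m + 1 - 1 = m := rfl
    rcases Nat.lt_or_ge s m with h | h
    · have A := ih h (by omega)
      have B := adj m (by omega) (by omega)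
      have hqm : 0 < Q (m-1) - Q m := sub_pos.mpr (Qanti' hQmono (m-1) m (by omega) (by omega))
      have hqs : 0 < Q (s-1) - Q s := sub_pos.mpr (Qanti' hQmono (s-1) s (by omega) (by omega))
      have hq1 : 0 < Q m - Q (m+1) := sub_pos.mpr (Qanti' hQmono m (m+1) (by omega) (by omega))
      rw [hred]
      nlinarith [mul_lt_mul_of_pos_right A hq1, mul_lt_mul_of_pos_left B hqs]
    · have hsm : s = m := by omega
      subst hsm
      rw [hred]
      exact adj s (by omega) (by omega)

/-- integer vertex lemma: each vertex of the diagram satisfies every edge inequality. -/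
lemma vertexZ (hPmono : ∀ i < n, P i < P (i + 1)) (hQmono : ∀ i < n, Q (i + 1) < Q i)
    (hconv : ∀ i, 1 ≤ i → i < n →
      ((Q (i - 1) - Q i : ℤ) : ℚ) / ((P i - P (i - 1) : ℤ) : ℚ) >
        ((Q i - Q (i + 1) : ℤ) : ℚ) / ((P (i + 1) - P i : ℤ) : ℚ)) :
    ∀ k t, 1 ≤ k → k ≤ n → t ≤ n →
      (Q (k - 1) - Q k) * P k + (P k - P (k - 1)) * Q k ≤
        (Q (k - 1) - Q k) * P t + (P k - P (k - 1)) * Q t := by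
  intro k t hk1 hkn htn
  have cr := crossZ hPmono hQmono hconv
  -- the linear functional
  set f : ℕ → ℤ := fun t => (Q (k - 1) - Q k) * P t + (P k - P (k - 1)) * Q t with hf
  show f k ≤ f t
  have up : ∀ m, k ≤ m → m ≤ n → f k ≤ f m := by
    intro m hkm hmn
    induction m with
    | zero => exact absurd hkm (by omega)
    | succ m ih =>
      rcases Nat.lt_or_ge k (m+1) with h | h
      · have hkm' : k ≤ m := by omega
        have step : f m ≤ f (m+1) := by
          have c := cr k (m+1) hk1 (by omega) (by omega)
          have hred : m + 1 - 1 = m := rfl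
          rw [hred] at c
          simp only [hf]
          nlinarith [c]
        exact le_trans (ih hkm' (by omega)) step
      · have : k = m + 1 := by omega
        simp [this]
  have down : ∀ d, d ≤ k → f k ≤ f (k - d) := by
    intro d
    induction d with
    | zero => simp
    | succ d ih =>
      intro hdk
      have ihd := ih (by omega)
      have step : f (k - d) ≤ f (k - (d+1)) := by
        rcases Nat.lt_or_ge (k - d) k with h | h
        · -- k - d < k, so use cross (k-d) k
          have c := cr (k - d) k (by omega) h hkn
          have hidx : k - (d+1) = (k - d) - 1 := by omega
          rw [hidx]
          simp only [hf]
          nlinarith [c]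
        · have hd0 : d = 0 := by omega
          subst hd0
          have e : f (k - 0) = f (k - 1) := by
            simp only [hf, Nat.sub_zero]; ring
          exact le_of_eq e
      exact le_trans ihd step
  rcases Nat.lt_or_ge t k with h | h
  · have := down (k - t) (by omega)
    have hidx : k - (k - t) = t := by omega
    rwa [hidx] at this
  · exact up t h htn

noncomputable def aA (Q : ℕ → ℤ) (k : ℕ) : ℝ := (Q (k-1) : ℝ) - (Q k : ℝ)
noncomputable def bB (P : ℕ → ℤ) (k : ℕ) : ℝ := (P k : ℝ) - (P (k-1) : ℝ)
noncomputable def cc (P Q : ℕ → ℤ) (k : ℕ) : ℝ :=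
  aA Q k * (P k : ℝ) + bB P k * (Q k : ℝ)

/-- the `k`-th staircase piece -/
def Dk (P Q : ℕ → ℤ) (k : ℕ) : Set (ℝ × ℝ) :=
  {z | 0 ≤ z.1 ∧ 0 ≤ z.2 ∧ aA Q k * z.1 + bB P k * z.2 ≤ cc P Q k}

/-- the vertex set -/
def vS (n : ℕ) (P Q : ℕ → ℤ) : Set (ℝ × ℝ) :=
  {x : ℝ × ℝ | ∃ i ≤ n, x = ((P i : ℝ), (Q i : ℝ))}

def quad : Set (ℝ × ℝ) := Set.Ici (0 : ℝ) ×ˢ Set.Ici (0 : ℝ)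

section Real

variable (hn : 1 ≤ n) (hP0 : P 0 = 0) (hQn : Q n = 0)
  (hPmono : ∀ i < n, P i < P (i + 1))
  (hQmono : ∀ i < n, Q (i + 1) < Q i)
  (hconv : ∀ i, 1 ≤ i → i < n →
      ((Q (i - 1) - Q i : ℤ) : ℚ) / ((P i - P (i - 1) : ℤ) : ℚ) >
        ((Q i - Q (i + 1) : ℤ) : ℚ) / ((P (i + 1) - P i : ℤ) : ℚ))

include hPmono in
lemma bBpos : ∀ k, 1 ≤ k → k ≤ n → 0 < bB P k := by
  intro k h1 h2
  have := Pmono' hPmono (k-1) k (by omega) h2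
  simp only [bB]; exact_mod_cast sub_pos.mpr this

include hQmono in
lemma aApos : ∀ k, 1 ≤ k → k ≤ n → 0 < aA Q k := by
  intro k h1 h2
  have := Qanti' hQmono (k-1) k (by omega) h2
  simp only [aA]; exact_mod_cast sub_pos.mpr this

include hP0 hPmono in
lemma Pnn : ∀ t, t ≤ n → (0:ℝ) ≤ (P t : ℝ) := by
  intro t ht
  rcases Nat.eq_zero_or_pos t with h | h
  · subst h; simp [hP0]
  · have := Pmono' hPmono 0 t h ht
    have : (0:ℤ) ≤ P t := by omega
    exact_mod_cast this

include hQn hQmono in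
lemma Qnn : ∀ t, t ≤ n → (0:ℝ) ≤ (Q t : ℝ) := by
  intro t ht
  rcases Nat.lt_or_ge t n with h | h
  · have := Qanti' hQmono t n h (le_refl n)
    have : (0:ℤ) ≤ Q t := by omega
    exact_mod_cast this
  · have : t = n := by omega
    subst this; simp [hQn]

lemma lineEq (k : ℕ) :
    aA Q k * (P (k-1) : ℝ) + bB P k * (Q (k-1) : ℝ) = cc P Q k := by
  simp only [aA, bB, cc]; ring

include hP0 hPmono hQn hQmono in
lemma ccpos : ∀ k, 1 ≤ k → k ≤ n → 0 < cc P Q k := by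
  intro k h1 h2
  have ha := aApos hQmono k h1 h2
  have hb := bBpos hPmono k h1 h2
  have hPk : (0:ℝ) < (P k : ℝ) := by
    have := Pmono' hPmono 0 k (by omega) h2
    rw [hP0] at this; exact_mod_cast this
  have hQk := Qnn hQn hQmono k h2
  simp only [cc]
  nlinarith

include hPmono hQmono hconv in
lemma vertexR : ∀ k t, 1 ≤ k → k ≤ n → t ≤ n →
    cc P Q k ≤ aA Q k * (P t : ℝ) + bB P k * (Q t : ℝ) := by
  intro k t h1 h2 h3
  have := vertexZ hPmono hQmono hconv k t h1 h2 h3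
  simp only [aA, bB, cc]
  exact_mod_cast this

include hPmono hQmono hconv in
lemma crossR : ∀ s t, 1 ≤ s → s < t → t ≤ n →
    bB P s * aA Q t < aA Q s * bB P t := by
  intro s t h1 h2 h3
  have := crossZ hPmono hQmono hconv s t h1 h2 h3
  simp only [aA, bB]
  exact_mod_cast this

include hP0 hPmono in
lemma findk : ∀ m, 1 ≤ m → m ≤ n → ∀ x : ℝ, 0 ≤ x → x ≤ (P m : ℝ) →
    ∃ k, 1 ≤ k ∧ k ≤ m ∧ (P (k-1) : ℝ) ≤ x ∧ x ≤ (P k : ℝ) := by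
  intro m
  induction m with
  | zero => omega
  | succ m ih =>
    intro _ hmn x hx0 hxm
    rcases Nat.eq_zero_or_pos m with h0 | h0
    · subst h0
      exact ⟨1, le_refl 1, le_refl 1, by simpa [hP0] using hx0, hxm⟩
    · rcases le_or_gt x (P m : ℝ) with h | h
      · obtain ⟨k, hk1, hk2, hk3, hk4⟩ := ih h0 (by omega) x hx0 h
        exact ⟨k, hk1, by omega, hk3, hk4⟩
      · exact ⟨m+1, by omega, le_refl _, le_of_lt h, hxm⟩

include hn hP0 hQn hPmono hQmono hconv in
lemma K_eq :
    convexHull ℝ (vS n P Q) + quad =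
      {z : ℝ × ℝ | 0 ≤ z.1 ∧ 0 ≤ z.2 ∧
        ∀ k, 1 ≤ k → k ≤ n → cc P Q k ≤ aA Q k * z.1 + bB P k * z.2} := by
  apply Set.Subset.antisymm
  · -- ⊆
    have hconvsub : convexHull ℝ (vS n P Q) ⊆
        {z : ℝ × ℝ | 0 ≤ z.1 ∧ 0 ≤ z.2 ∧
          ∀ k, 1 ≤ k → k ≤ n → cc P Q k ≤ aA Q k * z.1 + bB P k * z.2} := by
      apply convexHull_min
      · rintro z ⟨i, hi, rfl⟩
        exact ⟨Pnn hP0 hPmono i hi, Qnn hQn hQmono i hi,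
          fun k h1 h2 => vertexR hPmono hQmono hconv k i h1 h2 hi⟩
      · -- convexity
        rintro x ⟨hx1, hx2, hx3⟩ y ⟨hy1, hy2, hy3⟩ a b ha hb hab
        refine ⟨?_, ?_, ?_⟩
        · simp only [Prod.fst_add, Prod.smul_fst, smul_eq_mul]
          nlinarith
        · simp only [Prod.snd_add, Prod.smul_snd, smul_eq_mul]
          nlinarith
        · intro k h1 h2
          have h3 := hx3 k h1 h2
          have h4 := hy3 k h1 h2
          have hcc : a * cc P Q k + b * cc P Q k = cc P Q k := by
            rw [← add_mul, hab, one_mul]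
          simp only [Prod.fst_add, Prod.snd_add, Prod.smul_fst, Prod.smul_snd, smul_eq_mul]
          nlinarith [mul_le_mul_of_nonneg_left h3 ha, mul_le_mul_of_nonneg_left h4 hb, hcc]
    rintro z hz
    rw [Set.mem_add] at hz
    obtain ⟨u, hu, v, hv, rfl⟩ := hz
    obtain ⟨hu1, hu2, hu3⟩ := hconvsub hu
    obtain ⟨hv1, hv2⟩ := hv
    simp only [Set.mem_Ici] at hv1 hv2
    refine ⟨by simpa using add_nonneg hu1 hv1, by simpa using add_nonneg hu2 hv2, ?_⟩
    intro k h1 h2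
    have ha := (aApos hQmono k h1 h2).le
    have hb := (bBpos hPmono k h1 h2).le
    have := hu3 k h1 h2
    simp only [Prod.fst_add, Prod.snd_add]
    nlinarith
  · -- ⊇
    rintro z ⟨hz1, hz2, hz3⟩
    rcases le_or_gt (P n : ℝ) z.1 with h | h
    · -- beyond the last vertex
      rw [Set.mem_add]
      refine ⟨((P n : ℝ), (Q n : ℝ)), subset_convexHull ℝ _ ⟨n, le_refl n, rfl⟩,
        (z.1 - P n, z.2 - Q n), ⟨by simpa using h, by simp [hQn]; linarith⟩, ?_⟩
      ext <;> simp
    · obtain ⟨k, hk1, hkn, hlo, hhi⟩ := findk hP0 hPmono n hn (le_refl n) z.1 hz1 h.le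
      have hb := bBpos hPmono k hk1 hkn
      set t : ℝ := (z.1 - (P (k-1) : ℝ)) / bB P k with hT
      have ht0 : 0 ≤ t := div_nonneg (by linarith) hb.le
      have ht1 : t ≤ 1 := by
        rw [hT, div_le_one hb]
        simp only [bB]; linarith
      have hmul : t * bB P k = z.1 - (P (k-1) : ℝ) := div_mul_cancel₀ _ hb.ne'
      set u : ℝ × ℝ := (1-t) • ((P (k-1) : ℝ), (Q (k-1) : ℝ)) + t • ((P k : ℝ), (Q k : ℝ)) with hU
      have hu : u ∈ convexHull ℝ (vS n P Q) := by
        apply (convex_convexHull ℝ (vS n P Q))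
          (subset_convexHull ℝ _ ⟨k-1, by omega, rfl⟩)
          (subset_convexHull ℝ _ ⟨k, hkn, rfl⟩) (by linarith) ht0 (by ring)
      have hu1 : u.1 = z.1 := by
        simp only [hU, Prod.fst_add, Prod.smul_fst, smul_eq_mul]
        have hbb : bB P k = (P k : ℝ) - (P (k-1) : ℝ) := rfl
        nlinarith [hmul]
      have hu2 : aA Q k * u.1 + bB P k * u.2 = cc P Q k := by
        simp only [hU, Prod.fst_add, Prod.snd_add, Prod.smul_fst, Prod.smul_snd, smul_eq_mul]
        have l1 := lineEq (P := P) (Q := Q) k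
        simp only [aA, bB, cc] at l1 ⊢
        nlinarith [l1]
      have hz2' : u.2 ≤ z.2 := by
        have h3 := hz3 k hk1 hkn
        rw [← hu1] at h3
        nlinarith [hu2, hb]
      rw [Set.mem_add]
      refine ⟨u, hu, (0, z.2 - u.2), ⟨by simp, by simp; linarith⟩, ?_⟩
      ext
      · simp [hu1]
      · simp

lemma isClosed_Dk (k : ℕ) : IsClosed (Dk P Q k) := by
  have : Dk P Q k = {z : ℝ × ℝ | 0 ≤ z.1} ∩ ({z | 0 ≤ z.2} ∩ {z | aA Q k * z.1 + bB P k * z.2 ≤ cc P Q k}) := by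
    ext z; simp [Dk, and_assoc]
  rw [this]
  exact (isClosed_le continuous_const continuous_fst).inter
    ((isClosed_le continuous_const continuous_snd).inter
      (isClosed_le (by fun_prop) continuous_const))

include hP0 hQn hPmono hQmono in
lemma closure_piece : ∀ k, 1 ≤ k → k ≤ n →
    closure (quad ∩ {z : ℝ × ℝ | aA Q k * z.1 + bB P k * z.2 < cc P Q k}) = Dk P Q k := by
  intro k h1 h2
  apply Set.Subset.antisymm
  · apply closure_minimal
    · rintro z ⟨⟨hz1, hz2⟩, hz3⟩
      exact ⟨hz1, hz2, le_of_lt hz3⟩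
    · exact isClosed_Dk k
  · rintro z ⟨hz1, hz2, hz3⟩
    have hc := ccpos hP0 hQn hPmono hQmono k h1 h2
    apply mem_closure_iff_seq_limit.mpr
    refine ⟨fun m => ((m : ℝ)/(m+1) * z.1, (m : ℝ)/(m+1) * z.2), ?_, ?_⟩
    · intro m
      have htnn : (0:ℝ) ≤ (m : ℝ)/(m+1) :=
        div_nonneg (Nat.cast_nonneg m) (by positivity)
      have htlt : (m : ℝ)/(m+1) < 1 := by
        rw [div_lt_one (by positivity)]; linarith
      refine ⟨⟨mul_nonneg htnn hz1, mul_nonneg htnn hz2⟩, ?_⟩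
      show aA Q k * ((m : ℝ)/(m+1) * z.1) + bB P k * ((m : ℝ)/(m+1) * z.2) < cc P Q k
      have e : aA Q k * ((m : ℝ)/(m+1) * z.1) + bB P k * ((m : ℝ)/(m+1) * z.2)
          = (m : ℝ)/(m+1) * (aA Q k * z.1 + bB P k * z.2) := by ring
      rw [e]
      calc (m : ℝ)/(m+1) * (aA Q k * z.1 + bB P k * z.2)
          ≤ (m : ℝ)/(m+1) * cc P Q k := mul_le_mul_of_nonneg_left hz3 htnn
        _ < 1 * cc P Q k := by apply mul_lt_mul_of_pos_right htlt hc
        _ = cc P Q k := one_mul _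
    · have ht : Filter.Tendsto (fun m : ℕ => (m : ℝ)/(m+1)) Filter.atTop (nhds 1) := by
        have := tendsto_natCast_div_add_atTop (1 : ℝ)
        simpa using this
      have h1' : Filter.Tendsto (fun m : ℕ => (m : ℝ)/(m+1) * z.1) Filter.atTop (nhds z.1) := by
        simpa using ht.mul_const z.1
      have h2' : Filter.Tendsto (fun m : ℕ => (m : ℝ)/(m+1) * z.2) Filter.atTop (nhds z.2) := by
        simpa using ht.mul_const z.2
      exact h1'.prodMk_nhds h2'

include hn hP0 hQn hPmono hQmono hconv in
lemma gamma_eq : gammaMinus n P Q = ⋃ k ∈ Finset.Icc 1 n, Dk P Q k := by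
  have hset : (Set.Ici (0 : ℝ) ×ˢ Set.Ici (0 : ℝ)) \
      (convexHull ℝ {x : ℝ × ℝ | ∃ i ≤ n, x = ((P i : ℝ), (Q i : ℝ))} +
        Set.Ici (0 : ℝ) ×ˢ Set.Ici (0 : ℝ)) =
      ⋃ k ∈ Finset.Icc 1 n, (quad ∩ {z : ℝ × ℝ | aA Q k * z.1 + bB P k * z.2 < cc P Q k}) := by
    have hK := K_eq hn hP0 hQn hPmono hQmono hconv
    ext z
    simp only [Set.mem_diff, Set.mem_iUnion, Finset.mem_Icc, Set.mem_inter_iff,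
      Set.mem_setOf_eq, exists_prop]
    constructor
    · rintro ⟨hq, hnk⟩
      have hq' : z ∈ quad := hq
      obtain ⟨hz1, hz2⟩ := hq'
      simp only [Set.mem_Ici] at hz1 hz2
      by_contra hcon
      push_neg at hcon
      apply hnk
      show z ∈ convexHull ℝ (vS n P Q) + quad
      rw [hK]
      exact ⟨hz1, hz2, fun k h1 h2 => hcon k ⟨h1, h2⟩ hq⟩
    · rintro ⟨k, ⟨hk1, hk2⟩, hzq, hlt⟩
      refine ⟨hzq, fun hmem => ?_⟩
      have : z ∈ convexHull ℝ (vS n P Q) + quad := hmem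
      rw [hK] at this
      exact absurd (this.2.2 k hk1 hk2) (not_le.mpr hlt)
  rw [gammaMinus, hset, Finset.closure_biUnion]
  apply Set.iUnion₂_congr
  intro k hk
  rw [Finset.mem_Icc] at hk
  exact closure_piece hP0 hQn hPmono hQmono k hk.1 hk.2

include hn hP0 hQn hPmono hQmono hconv in
lemma interior_eq : interior (gammaMinus n P Q) =
    {z : ℝ × ℝ | 0 < z.1 ∧ 0 < z.2 ∧
      ∃ k, 1 ≤ k ∧ k ≤ n ∧ aA Q k * z.1 + bB P k * z.2 < cc P Q k} := by
  have hG := gamma_eq hn hP0 hQn hPmono hQmono hconv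
  apply Set.Subset.antisymm
  · intro z hz
    have hzG : z ∈ gammaMinus n P Q := interior_subset hz
    rw [hG] at hzG
    simp only [Set.mem_iUnion, Finset.mem_Icc, exists_prop] at hzG
    obtain ⟨k0, ⟨hk01, hk02⟩, hzk0⟩ := hzG
    obtain ⟨hz1, hz2, hz3⟩ := hzk0
    obtain ⟨ε, hε, hball⟩ := Metric.mem_nhds_iff.mp (mem_interior_iff_mem_nhds.mp hz)
    have hdist : ∀ w : ℝ × ℝ, dist w.1 z.1 < ε → dist w.2 z.2 < ε → w ∈ gammaMinus n P Q := by
      intro w h1 h2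
      exact hball (by rw [Metric.mem_ball, Prod.dist_eq]; exact max_lt h1 h2)
    have hmem : ∀ w : ℝ × ℝ, w ∈ gammaMinus n P Q →
        (0 ≤ w.1 ∧ 0 ≤ w.2 ∧ ∃ k, 1 ≤ k ∧ k ≤ n ∧ aA Q k * w.1 + bB P k * w.2 ≤ cc P Q k) := by
      intro w hw
      rw [hG] at hw
      simp only [Set.mem_iUnion, Finset.mem_Icc, exists_prop] at hw
      obtain ⟨k, ⟨h1, h2⟩, hw1, hw2, hw3⟩ := hw
      exact ⟨hw1, hw2, k, h1, h2, hw3⟩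
    have hx : 0 < z.1 := by
      by_contra hx
      push_neg at hx
      have := hmem (z.1 - ε/2, z.2) (hdist _
        (by rw [Real.dist_eq, show z.1 - ε/2 - z.1 = -(ε/2) by ring, abs_neg,
              abs_of_nonneg (by linarith)]; linarith)
        (by simpa using hε))
      obtain ⟨h1, -, -⟩ := this
      simp at h1
      linarith
    have hy : 0 < z.2 := by
      by_contra hy
      push_neg at hy
      have := hmem (z.1, z.2 - ε/2) (hdist _ (by simpa using hε)
        (by rw [Real.dist_eq, show z.2 - ε/2 - z.2 = -(ε/2) by ring, abs_neg,
              abs_of_nonneg (by linarith)]; linarith))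
      obtain ⟨-, h2, -⟩ := this
      simp at h2
      linarith
    refine ⟨hx, hy, ?_⟩
    by_contra hcon
    push_neg at hcon
    have := hmem (z.1 + ε/2, z.2 + ε/2)
      (hdist _
        (by rw [Real.dist_eq, show z.1 + ε/2 - z.1 = ε/2 by ring,
              abs_of_nonneg (by linarith)]; linarith)
        (by rw [Real.dist_eq, show z.2 + ε/2 - z.2 = ε/2 by ring,
              abs_of_nonneg (by linarith)]; linarith))
    obtain ⟨-, -, k, h1, h2, h3⟩ := this
    have ha := aApos hQmono k h1 h2
    have hb := bBpos hPmono k h1 h2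
    have := hcon k h1 h2
    simp only at h3
    nlinarith
  · intro z ⟨hz1, hz2, k, hk1, hk2, hk3⟩
    have hopen : IsOpen {z : ℝ × ℝ | 0 < z.1 ∧ 0 < z.2 ∧
        ∃ k, 1 ≤ k ∧ k ≤ n ∧ aA Q k * z.1 + bB P k * z.2 < cc P Q k} := by
      have : {z : ℝ × ℝ | 0 < z.1 ∧ 0 < z.2 ∧
          ∃ k, 1 ≤ k ∧ k ≤ n ∧ aA Q k * z.1 + bB P k * z.2 < cc P Q k} =
          {z : ℝ × ℝ | 0 < z.1} ∩ ({z | 0 < z.2} ∩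
            ⋃ k ∈ Finset.Icc 1 n, {z : ℝ × ℝ | aA Q k * z.1 + bB P k * z.2 < cc P Q k}) := by
        ext w
        simp only [Set.mem_inter_iff, Set.mem_setOf_eq, Set.mem_iUnion, Finset.mem_Icc,
          exists_prop, and_assoc]
      rw [this]
      refine (isOpen_lt continuous_const continuous_fst).inter
        ((isOpen_lt continuous_const continuous_snd).inter (isOpen_biUnion fun k _ => ?_))
      exact isOpen_lt (by fun_prop) continuous_const
    apply interior_maximal ?_ hopen ⟨hz1, hz2, k, hk1, hk2, hk3⟩
    rintro w ⟨hw1, hw2, k', h1, h2, h3⟩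
    rw [hG]
    simp only [Set.mem_iUnion, Finset.mem_Icc, exists_prop]
    exact ⟨k', ⟨h1, h2⟩, hw1.le, hw2.le, h3.le⟩

include hPmono hQmono hconv in
lemma boundary_sub : ∀ z ∈ newtonBoundary n P Q,
    ∀ k, 1 ≤ k → k ≤ n → cc P Q k ≤ aA Q k * z.1 + bB P k * z.2 := by
  intro z hz k h1 h2
  rw [newtonBoundary] at hz
  simp only [Set.mem_iUnion, Finset.mem_Icc, exists_prop] at hz
  obtain ⟨i, ⟨hi1, hi2⟩, hseg⟩ := hz
  obtain ⟨a, b, ha, hb, hab, rfl⟩ := hseg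
  have v1 := vertexR hPmono hQmono hconv k (i-1) h1 h2 (by omega)
  have v2 := vertexR hPmono hQmono hconv k i h1 h2 hi2
  simp only [Prod.fst_add, Prod.snd_add, Prod.smul_fst, Prod.smul_snd, smul_eq_mul]
  have hcc : a * cc P Q k + b * cc P Q k = cc P Q k := by rw [← add_mul, hab, one_mul]
  nlinarith [mul_le_mul_of_nonneg_left v1 ha, mul_le_mul_of_nonneg_left v2 hb, hcc]

include hn hP0 hQn hPmono hQmono hconv in
lemma boundary_mem (z : ℝ × ℝ) (hz1 : 0 ≤ z.1) (hz2 : 0 ≤ z.2)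
    (hall : ∀ k, 1 ≤ k → k ≤ n → cc P Q k ≤ aA Q k * z.1 + bB P k * z.2)
    (k : ℕ) (hk1 : 1 ≤ k) (hkn : k ≤ n)
    (heq : aA Q k * z.1 + bB P k * z.2 = cc P Q k) :
    z ∈ newtonBoundary n P Q := by
  have ha := aApos hQmono k hk1 hkn
  have hb := bBpos hPmono k hk1 hkn
  -- upper bound on z.1
  have hup : z.1 ≤ (P k : ℝ) := by
    rcases Nat.lt_or_ge k n with hlt | hge
    · -- use edge k+1
      have hF := hall (k+1) (by omega) (by omega)
      have hcr := crossR hPmono hQmono hconv k (k+1) hk1 (by omega) (by omega)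
      have l1 : aA Q (k+1) * (P k : ℝ) + bB P (k+1) * (Q k : ℝ) = cc P Q (k+1) := by
        have := lineEq (P := P) (Q := Q) (k+1)
        simpa using this
      have idl : bB P k * cc P Q (k+1) - bB P (k+1) * cc P Q k =
          (P k : ℝ) * (bB P k * aA Q (k+1) - bB P (k+1) * aA Q k) := by
        have l1' := l1
        simp only [cc, aA, bB, Nat.add_sub_cancel] at l1' ⊢
        linear_combination ((P k : ℝ) - (P (k-1) : ℝ)) * l1'
      have hF2 : bB P k * cc P Q (k+1) ≤ bB P k * (aA Q (k+1) * z.1 + bB P (k+1) * z.2) :=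
        mul_le_mul_of_nonneg_left hF hb.le
      have hE2 : bB P (k+1) * (aA Q k * z.1 + bB P k * z.2) = bB P (k+1) * cc P Q k := by
        rw [heq]
      have key : 0 ≤ (z.1 - (P k : ℝ)) * (bB P k * aA Q (k+1) - bB P (k+1) * aA Q k) := by
        nlinarith [hF2, hE2, idl]
      nlinarith [key, hcr]
    · -- k = n
      have hkeq : k = n := by omega
      subst hkeq
      have : bB P k * z.2 = cc P Q k - aA Q k * z.1 := by linarith
      have hQk : (Q k : ℝ) = 0 := by exact_mod_cast congrArg (Int.cast : ℤ → ℝ) hQn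
      have hcck : cc P Q k = aA Q k * (P k : ℝ) := by
        simp only [cc, hQk]; ring
      nlinarith [mul_nonneg hb.le hz2]
  -- lower bound on z.1
  have hlo : (P (k-1) : ℝ) ≤ z.1 := by
    rcases Nat.lt_or_ge 1 k with hlt | hge
    · -- k ≥ 2, use edge k-1
      have hj1 : 1 ≤ k - 1 := by omega
      have hjn : k - 1 ≤ n := by omega
      have hF := hall (k-1) hj1 hjn
      have hcr := crossR hPmono hQmono hconv (k-1) k hj1 (by omega) hkn
      have l2 : aA Q k * (P (k-1) : ℝ) + bB P k * (Q (k-1) : ℝ) = cc P Q k :=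
        lineEq (P := P) (Q := Q) k
      have idl : bB P k * cc P Q (k-1) - bB P (k-1) * cc P Q k =
          (P (k-1) : ℝ) * (bB P k * aA Q (k-1) - bB P (k-1) * aA Q k) := by
        have l2' := l2
        simp only [cc, aA, bB, Nat.add_sub_cancel] at l2' ⊢
        linear_combination ((P (k-1) : ℝ) - (P (k-1-1) : ℝ)) * l2'
      have hF2 : bB P k * cc P Q (k-1) ≤ bB P k * (aA Q (k-1) * z.1 + bB P (k-1) * z.2) :=
        mul_le_mul_of_nonneg_left hF hb.le
      have hE2 : bB P (k-1) * (aA Q k * z.1 + bB P k * z.2) = bB P (k-1) * cc P Q k := by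
        rw [heq]
      have key : 0 ≤ (z.1 - (P (k-1) : ℝ)) * (bB P k * aA Q (k-1) - bB P (k-1) * aA Q k) := by
        nlinarith [hF2, hE2, idl]
      nlinarith [key, hcr]
    · have hkeq : k = 1 := by omega
      subst hkeq
      simp only [Nat.sub_self, hP0]
      simpa using hz1
  -- construct the segment point
  set t : ℝ := (z.1 - (P (k-1) : ℝ)) / bB P k with hT
  have ht0 : 0 ≤ t := div_nonneg (by linarith) hb.le
  have ht1 : t ≤ 1 := by
    rw [hT, div_le_one hb]
    simp only [bB]; linarith
  have hmul : t * bB P k = z.1 - (P (k-1) : ℝ) := div_mul_cancel₀ _ hb.ne'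
  rw [newtonBoundary]
  simp only [Set.mem_iUnion, Finset.mem_Icc, exists_prop]
  refine ⟨k, ⟨hk1, hkn⟩, 1 - t, t, by linarith, ht0, by ring, ?_⟩
  have l2 : aA Q k * (P (k-1) : ℝ) + bB P k * (Q (k-1) : ℝ) = cc P Q k :=
    lineEq (P := P) (Q := Q) k
  have hco1 : (1 - t) * (P (k-1) : ℝ) + t * (P k : ℝ) = z.1 := by
    have hbb : bB P k = (P k : ℝ) - (P (k-1) : ℝ) := rfl
    nlinarith [hmul]
  have hco2 : (1 - t) * (Q (k-1) : ℝ) + t * (Q k : ℝ) = z.2 := by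
    apply mul_left_cancel₀ hb.ne'
    have hbb : bB P k = (P k : ℝ) - (P (k-1) : ℝ) := rfl
    have haa : aA Q k = (Q (k-1) : ℝ) - (Q k : ℝ) := rfl
    nlinarith [hmul, l2, heq]
  ext
  · simpa using hco1
  · simpa using hco2

end Real



end NDaux

/-- For a Newton diagram datum with `gcd(pᵢ,qᵢ) = 1`, the number of unit lattice squares
with nonnegative-integer corner contained in `Γ₋` none of whose vertices lies on the
Newton boundary `Γ` equals the number of lattice points in the interior of `Γ₋`. -/
theorem num_squares_avoiding_boundary_eq_interior_points (n : ℕ) (hn : 1 ≤ n)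
    (P Q : ℕ → ℤ) (hP0 : P 0 = 0) (hQn : Q n = 0)
    (hPmono : ∀ i < n, P i < P (i + 1))
    (hQmono : ∀ i < n, Q (i + 1) < Q i)
    (hconv : ∀ i, 1 ≤ i → i < n →
      ((Q (i - 1) - Q i : ℤ) : ℚ) / ((P i - P (i - 1) : ℤ) : ℚ) >
        ((Q i - Q (i + 1) : ℤ) : ℚ) / ((P (i + 1) - P i : ℤ) : ℚ))
    (hgcd : ∀ i, 1 ≤ i → i ≤ n → Int.gcd (P i - P (i - 1)) (Q (i - 1) - Q i) = 1) :
    {ij : ℕ × ℕ | unitSq ij.1 ij.2 ⊆ gammaMinus n P Q ∧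
        unitSqVertices ij.1 ij.2 ∩ newtonBoundary n P Q = ∅}.ncard =
      {x : ℝ × ℝ | x ∈ interior (gammaMinus n P Q) ∧
        ∃ a b : ℤ, x = ((a : ℝ), (b : ℝ))}.ncard := by
  classical
  have hG := NDaux.gamma_eq hn hP0 hQn hPmono hQmono hconv
  have hI := NDaux.interior_eq hn hP0 hQn hPmono hQmono hconv
  set f : ℕ × ℕ → ℝ × ℝ := fun ij => (((ij.1 : ℝ) + 1), ((ij.2 : ℝ) + 1)) with hf
  have hinj : Function.Injective f := by
    rintro ⟨i, j⟩ ⟨i', j'⟩ h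
    simp only [hf, Prod.mk.injEq] at h
    obtain ⟨h1, h2⟩ := h
    have e1 : (i : ℝ) = i' := by linarith
    have e2 : (j : ℝ) = j' := by linarith
    have : i = i' := by exact_mod_cast e1
    have : j = j' := by exact_mod_cast e2
    simp_all
  have himg : {x : ℝ × ℝ | x ∈ interior (gammaMinus n P Q) ∧
        ∃ a b : ℤ, x = ((a : ℝ), (b : ℝ))} =
      f '' {ij : ℕ × ℕ | unitSq ij.1 ij.2 ⊆ gammaMinus n P Q ∧
        unitSqVertices ij.1 ij.2 ∩ newtonBoundary n P Q = ∅} := by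
    ext x
    simp only [Set.mem_setOf_eq, Set.mem_image]
    constructor
    · rintro ⟨hxint, a, b, rfl⟩
      rw [hI] at hxint
      obtain ⟨hx1, hx2, k, hk1, hk2, hk3⟩ := hxint
      simp only at hx1 hx2 hk3
      have hA : 1 ≤ a := by
        have : (0 : ℤ) < a := by exact_mod_cast hx1
        omega
      have hB : 1 ≤ b := by
        have : (0 : ℤ) < b := by exact_mod_cast hx2
        omega
      have hca : (((a - 1).toNat : ℕ) : ℝ) = (a : ℝ) - 1 := by
        have h' : (((a - 1).toNat : ℕ) : ℤ) = a - 1 := Int.toNat_of_nonneg (by omega)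
        exact_mod_cast congrArg (Int.cast : ℤ → ℝ) h'
      have hcb : (((b - 1).toNat : ℕ) : ℝ) = (b : ℝ) - 1 := by
        have h' : (((b - 1).toNat : ℕ) : ℤ) = b - 1 := Int.toNat_of_nonneg (by omega)
        exact_mod_cast congrArg (Int.cast : ℤ → ℝ) h'
      have ha := NDaux.aApos (n := n) (Q := Q) hQmono k hk1 hk2
      have hb := NDaux.bBpos (n := n) (P := P) hPmono k hk1 hk2
      refine ⟨((a - 1).toNat, (b - 1).toNat), ⟨?_, ?_⟩, ?_⟩
      · -- square contained in Γ₋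
        intro w hw
        rw [hG]
        simp only [Set.mem_iUnion, Finset.mem_Icc, exists_prop]
        obtain ⟨hw1, hw2⟩ := hw
        simp only [Set.mem_Icc] at hw1 hw2
        obtain ⟨hw1a, hw1b⟩ := hw1
        obtain ⟨hw2a, hw2b⟩ := hw2
        push_cast [hca, hcb] at hw1a hw1b hw2a hw2b
        have hA' : (1 : ℝ) ≤ (a : ℝ) := by exact_mod_cast hA
        have hB' : (1 : ℝ) ≤ (b : ℝ) := by exact_mod_cast hB
        refine ⟨k, ⟨hk1, hk2⟩, by linarith, by linarith, ?_⟩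
        show NDaux.aA Q k * w.1 + NDaux.bB P k * w.2 ≤ NDaux.cc P Q k
        nlinarith [hk3, ha.le, hb.le]
      · -- vertices avoid Γ
        rw [Set.eq_empty_iff_forall_notMem]
        rintro v ⟨hv, hvB⟩
        have hbnd := NDaux.boundary_sub hPmono hQmono hconv v hvB k hk1 hk2
        have hvle : v.1 ≤ (a : ℝ) ∧ v.2 ≤ (b : ℝ) := by
          simp only [unitSqVertices, Set.mem_insert_iff, Set.mem_singleton_iff] at hv
          rcases hv with h | h | h | h <;> subst h <;>
            constructor <;> push_cast [hca, hcb] <;> linarith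
        nlinarith [hbnd, hk3, hvle.1, hvle.2, ha, hb]
      · -- f value
        simp only [hf, Prod.mk.injEq]
        constructor <;> [rw [hca]; rw [hcb]] <;> ring
    · rintro ⟨⟨i, j⟩, ⟨hsub, hvert⟩, rfl⟩
      have hcornerSq : (((i : ℝ) + 1), ((j : ℝ) + 1)) ∈ unitSq (i : ℤ) (j : ℤ) := by
        constructor <;> simp only [Set.mem_Icc] <;> push_cast <;>
          constructor <;> linarith [Nat.cast_nonneg (α := ℝ) i, Nat.cast_nonneg (α := ℝ) j]
      have hcorner := hsub hcornerSq
      rw [hG] at hcorner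
      simp only [Set.mem_iUnion, Finset.mem_Icc, exists_prop] at hcorner
      obtain ⟨k, ⟨hk1, hk2⟩, h1, h2, h3⟩ := hcorner
      have hnotB : (((i : ℝ) + 1), ((j : ℝ) + 1)) ∉ newtonBoundary n P Q := by
        rw [Set.eq_empty_iff_forall_notMem] at hvert
        intro hmem
        apply hvert (((i : ℝ) + 1), ((j : ℝ) + 1))
        refine ⟨?_, hmem⟩
        simp only [unitSqVertices, Set.mem_insert_iff, Set.mem_singleton_iff]
        right; right; right
        push_cast
        rfl
      constructor
      · rw [hI]
        refine ⟨by positivity, by positivity, ?_⟩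
        by_contra hno
        push_neg at hno
        have heq : NDaux.aA Q k * ((i : ℝ) + 1) + NDaux.bB P k * ((j : ℝ) + 1) =
            NDaux.cc P Q k := le_antisymm h3 (hno k hk1 hk2)
        exact hnotB (NDaux.boundary_mem hn hP0 hQn hPmono hQmono hconv _
          (by positivity) (by positivity)
          (fun k' h1' h2' => hno k' h1' h2') k hk1 hk2 heq)
      · exact ⟨(i : ℤ) + 1, (j : ℤ) + 1, by push_cast; rfl⟩
  rw [himg, Set.ncard_image_of_injective _ hinj]
end

section
/- Fix a Newton diagram datum: an integer n ≥ 1 and lattice points (P₀,Q₀),…,(Pₙ,Qₙ) ∈ ℤ² with P₀ = 0, Qₙ = 0, P₀ < P₁ < … < Pₙ, Q₀ > Q₁ > … > Qₙ, p = Pₙ, q = Q₀, pᵢ = Pᵢ − Pᵢ₋₁, qᵢ = Qᵢ₋₁ − Qᵢ, q₁/p₁ > … > qₙ/pₙ, and gcd(pᵢ,qᵢ) = 1 for each i. Let Γ₋ be the closure of (ℝ≥0)² \ (conv{(P₀,Q₀),…,(Pₙ,Qₙ)} + (ℝ≥0)²). Then 2·vol(Γ₋) − (p + q) + 1 = v +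 r, where vol denotes 2-dimensional Lebesgue measure, v is the number of pairs (i,j) of nonnegative integers with S(i,j) = [i,i+1] × [j,j+1] ⊆ Γ₋, and r is the number of lattice points in the topological interior of Γ₋. -/
open Set MeasureTheory Pointwise

/-!
The Newton polyhedron is the epigraph of the convex piecewise-linear function
`H = max (0, ℓ₁, …, ℓₙ)`, `ℓᵢ` the line through the `i`-th edge, so `Γ₋` is the region under the
graph of `H` over `[0, p]`; `H` is positive on `[0, p)` and vanishes at `p`. Column `x` contains
`⌊H x⌋` unit squares of `Γ₋` and, for `0 < x < p`, `⌈H x⌉ - 1` interior lattice points, so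
`v + r = ∑_{x=1}^{p} (⌊H x⌋ + ⌈H x⌉) - p + 1`.

On the `i`-th edge `H` is centrally symmetric: `H (Pᵢ₋₁ + Pᵢ - x) = Qᵢ₋₁ + Qᵢ - H x`. Pairing `x`
with its reflection turns `⌊H x⌋ + ⌈H (Pᵢ₋₁ + Pᵢ - x)⌉` into `Qᵢ₋₁ + Qᵢ`, and the same symmetry
gives the trapezoid area `pᵢ (Qᵢ₋₁ + Qᵢ) / 2` under the edge. Hence both sides equal
`∑ pᵢ (Qᵢ₋₁ + Qᵢ) - q - p + 1`.
-/

open Filter Topology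

theorem ncard_setOf_mem_and_mem {α β : Type*} (s : Finset α) (t : α → Finset β) :
    {z : α × β | z.1 ∈ s ∧ z.2 ∈ t z.1}.ncard = ∑ i ∈ s, (t i).card := by
  rw [← Finset.card_sigma, ← Set.ncard_coe_finset,
    ← Set.ncard_image_of_injective _ (Equiv.sigmaEquivProd α β).injective]
  congr 1
  ext ⟨i, j⟩
  simp

section RegionUnder

def regionUnder (f : ℝ → ℝ) (a : ℝ) : Set (ℝ × ℝ) :=
  {z | z.1 ∈ Icc 0 a ∧ z.2 ∈ Icc 0 (f z.1)}

variable {f : ℝ → ℝ}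

theorem isClosed_regionUnder (hf : Continuous f) (a : ℝ) : IsClosed (regionUnder f a) :=
  (isClosed_Icc.preimage continuous_fst).inter
    ((isClosed_le continuous_const continuous_snd).inter
      (isClosed_le continuous_snd (hf.comp continuous_fst)))

theorem interior_regionUnder (hf : Continuous f) (a : ℝ) :
    interior (regionUnder f a) = {z | z.1 ∈ Ioo 0 a ∧ z.2 ∈ Ioo 0 (f z.1)} := by
  refine Subset.antisymm ?_ (interior_maximal ?_ ?_)
  · rintro ⟨x, y⟩ hz
    obtain ⟨ε, hε, hball⟩ := Metric.mem_nhds_iff.mp (mem_interior_iff_mem_nhds.mp hz)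
    have near : ∀ u v : ℝ, |u| < ε → |v| < ε → (x + u, y + v) ∈ regionUnder f a :=
      fun u v hu hv => hball (by simpa [Prod.dist_eq, Real.dist_eq] using ⟨hu, hv⟩)
    have hδ : |ε / 2| < ε := by rw [abs_of_pos (half_pos hε)]; linarith
    have hδ' : |-(ε / 2)| < ε := by rwa [abs_neg]
    have h0 : |(0 : ℝ)| < ε := by simpa using hε
    obtain ⟨⟨hx0, -⟩, -⟩ := near _ _ hδ' h0
    obtain ⟨⟨-, hxa⟩, -⟩ := near _ _ hδ h0
    obtain ⟨-, hy0, -⟩ := near _ _ h0 hδ'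
    obtain ⟨-, -, hyf⟩ := near _ _ h0 hδ
    simp only [add_zero] at hx0 hxa hy0 hyf
    exact ⟨⟨by linarith, by linarith⟩, by linarith, by linarith⟩
  · exact fun z hz => ⟨Ioo_subset_Icc_self hz.1, Ioo_subset_Icc_self hz.2⟩
  · exact (isOpen_Ioo.preimage continuous_fst).inter
      ((isOpen_lt continuous_const continuous_snd).inter
        (isOpen_lt continuous_snd (hf.comp continuous_fst)))

theorem volume_regionUnder (hf : Continuous f) {a : ℝ} (ha : 0 ≤ a)
    (hf0 : ∀ x ∈ Icc 0 a, 0 ≤ f x) :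
    volume (regionUnder f a) = ENNReal.ofReal (∫ x in 0..a, f x) := by
  have hslice : ∀ x, volume (Prod.mk x ⁻¹' regionUnder f a) =
      (Icc 0 a).indicator (fun x => ENNReal.ofReal (f x)) x := by
    intro x
    by_cases hx : x ∈ Icc 0 a
    · have hslice : Prod.mk x ⁻¹' regionUnder f a = Icc 0 (f x) :=
        ext fun _ => and_iff_right hx
      rw [indicator_of_mem hx, hslice, Real.volume_Icc, sub_zero]
    · have hslice : Prod.mk x ⁻¹' regionUnder f a = ∅ :=
        eq_empty_of_forall_notMem fun _ hy => hx hy.1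
      rw [indicator_of_notMem hx, hslice, measure_empty]
  rw [Measure.volume_eq_prod, Measure.prod_apply (isClosed_regionUnder hf a).measurableSet,
    lintegral_congr hslice, lintegral_indicator measurableSet_Icc,
    ← ofReal_integral_eq_lintegral_ofReal hf.integrableOn_Icc
      ((ae_restrict_iff' measurableSet_Icc).mpr (Eventually.of_forall hf0)),
    intervalIntegral.integral_of_le ha, integral_Icc_eq_integral_Ioc]

theorem closure_setOf_lt_eq_regionUnder (hf : Continuous f) (hanti : Antitone f) {a : ℝ}
    (ha : 0 < a) (hfa : f a = 0) (hpos : ∀ x < a, 0 < f x) :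
    closure {z : ℝ × ℝ | 0 ≤ z.1 ∧ z.2 ∈ Ico 0 (f z.1)} = regionUnder f a := by
  refine Subset.antisymm (closure_minimal ?_ (isClosed_regionUnder hf a)) ?_
  · rintro ⟨x, y⟩ ⟨hx, hy0, hyf⟩
    have hxa : x ≤ a := not_lt.mp fun hax => by linarith [hanti hax.le]
    exact ⟨⟨hx, hxa⟩, hy0, hyf.le⟩
  · rintro z ⟨⟨hx0, hxa⟩, hy0, hyf⟩
    -- shrinking towards the origin pushes points of the closed region into the open one
    have hshrink : ∀ c ∈ Ioo (0 : ℝ) 1,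
        c • z ∈ {z : ℝ × ℝ | 0 ≤ z.1 ∧ z.2 ∈ Ico 0 (f z.1)} := by
      rintro c ⟨hc0, hc1⟩
      have hcx : c * z.1 ≤ z.1 := by nlinarith
      refine ⟨mul_nonneg hc0.le hx0, mul_nonneg hc0.le hy0, ?_⟩
      show c * z.2 < f (c * z.1)
      rcases hy0.eq_or_lt with hy | hy
      · rw [← hy, mul_zero]
        exact hpos _ (by nlinarith)
      · calc c * z.2 < z.2 := by nlinarith
          _ ≤ f z.1 := hyf
          _ ≤ f (c * z.1) := hanti hcx
    have hlim : Tendsto (fun c : ℝ => c • z) (𝓝[<] 1) (𝓝 z) :=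
      ((show Continuous fun c : ℝ => c • z by fun_prop).tendsto' 1 z (one_smul ℝ z)).mono_left
        nhdsWithin_le_nhds
    exact mem_closure_of_tendsto hlim
      (Filter.mem_of_superset (Ioo_mem_nhdsLT zero_lt_one) hshrink)

theorem unitSq_subset_regionUnder_iff (hanti : Antitone f) (a : ℝ) (i j : ℕ) :
    unitSq i j ⊆ regionUnder f a ↔ (i : ℝ) + 1 ≤ a ∧ (j : ℝ) + 1 ≤ f (i + 1) := by
  simp only [unitSq, Int.cast_natCast]
  constructor
  · intro hsub
    obtain ⟨⟨-, hia⟩, -, hjf⟩ := hsub (mk_mem_prod (right_mem_Icc.mpr (by linarith))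
      (right_mem_Icc.mpr (by linarith)))
    exact ⟨hia, hjf⟩
  · rintro ⟨hia, hjf⟩ ⟨x, y⟩ ⟨⟨hix, hxi⟩, hjy, hyj⟩
    have hi : (0 : ℝ) ≤ i := i.cast_nonneg
    have hj : (0 : ℝ) ≤ j := j.cast_nonneg
    exact ⟨⟨by linarith, by linarith⟩, by linarith, hyj.trans (hjf.trans (hanti hxi))⟩

theorem ncard_unitSq_subset_regionUnder (hanti : Antitone f) {p : ℤ} (hfp : 0 ≤ f p) :
    ({ij : ℕ × ℕ | unitSq ij.1 ij.2 ⊆ regionUnder f p}.ncard : ℤ) =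
      ∑ x ∈ Finset.Ioc 0 p, ⌊f x⌋ := by
  have hcells : {ij : ℕ × ℕ | unitSq ij.1 ij.2 ⊆ regionUnder f p} =
      {ij | ij.1 ∈ Finset.range p.toNat ∧ ij.2 ∈ Finset.range ⌊f (ij.1 + 1)⌋₊} := by
    ext ⟨i, j⟩
    simp only [mem_ofPred_eq, Finset.mem_range, unitSq_subset_regionUnder_iff hanti,
      ← Nat.succ_le_iff, Nat.le_floor_iff' j.succ_ne_zero]
    push_cast
    constructor <;> rintro ⟨hi, hj⟩ <;> refine ⟨?_, hj⟩
    · have : (i : ℤ) + 1 ≤ p := by exact_mod_cast hi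
      omega
    · exact_mod_cast (show (i : ℤ) + 1 ≤ p by omega)
  rw [hcells, ncard_setOf_mem_and_mem (Finset.range p.toNat) fun i => Finset.range ⌊f (i + 1)⌋₊,
    Int.Ioc_eq_finset_map, Finset.sum_map, sub_zero]
  push_cast
  refine Finset.sum_congr rfl fun i hi => ?_
  have hip : (i : ℝ) + 1 ≤ p := by
    have := Finset.mem_range.mp hi
    exact_mod_cast (show (i : ℤ) + 1 ≤ p by omega)
  simp only [Finset.card_range, Function.comp_apply, Nat.castEmbedding_apply,
    addLeftEmbedding_apply]
  push_cast
  rw [add_comm 1, Int.natCast_floor_eq_floor (hfp.trans (hanti hip))]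

theorem ncard_lattice_interior_regionUnder (hf : Continuous f) {p : ℤ}
    (hpos : ∀ x < (p : ℝ), 0 < f x) :
    ({x : ℝ × ℝ | x ∈ interior (regionUnder f p) ∧ ∃ a b : ℤ, x = ((a : ℝ), (b : ℝ))}.ncard
      : ℤ) = ∑ x ∈ Finset.Ioo 0 p, (⌈f x⌉ - 1) := by
  have hpoints : {x : ℝ × ℝ | x ∈ interior (regionUnder f p) ∧ ∃ a b : ℤ, x = ((a : ℝ), (b : ℝ))} =
      (fun z : ℤ × ℤ => ((z.1 : ℝ), (z.2 : ℝ))) ''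
        {z | z.1 ∈ Finset.Ioo 0 p ∧ z.2 ∈ Finset.Ioo 0 ⌈f z.1⌉} := by
    ext x
    simp only [interior_regionUnder hf, mem_ofPred_eq, mem_image, Finset.mem_Ioo, mem_Ioo,
      Prod.exists, Int.lt_ceil]
    constructor
    · rintro ⟨hx, a, b, rfl⟩
      exact ⟨a, b, by simpa using hx, rfl⟩
    · rintro ⟨a, b, hab, rfl⟩
      exact ⟨by simpa using hab, a, b, rfl⟩
  have hinj : Function.Injective fun z : ℤ × ℤ => ((z.1 : ℝ), (z.2 : ℝ)) := by
    rintro ⟨a, b⟩ ⟨c, d⟩ h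
    simp_all
  rw [hpoints, ncard_image_of_injective _ hinj,
    ncard_setOf_mem_and_mem (Finset.Ioo 0 p) fun a => Finset.Ioo 0 ⌈f a⌉]
  push_cast
  refine Finset.sum_congr rfl fun a ha => ?_
  have hfa : 0 < f a := hpos a (by exact_mod_cast (Finset.mem_Ioo.mp ha).2)
  have := Int.ceil_pos.mpr hfa
  rw [Int.card_Ioo]
  omega

theorem ncard_add_ncard_regionUnder (hf : Continuous f) (hanti : Antitone f) {p : ℤ}
    (hp : 0 < p) (hfp : f p = 0) (hpos : ∀ x < (p : ℝ), 0 < f x) :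
    ({ij : ℕ × ℕ | unitSq ij.1 ij.2 ⊆ regionUnder f p}.ncard : ℤ) +
      {x : ℝ × ℝ | x ∈ interior (regionUnder f p) ∧ ∃ a b : ℤ, x = ((a : ℝ), (b : ℝ))}.ncard =
      ∑ x ∈ Finset.Ioc 0 p, (⌊f x⌋ + ⌈f x⌉) - p + 1 := by
  rw [ncard_unitSq_subset_regionUnder hanti hfp.ge, ncard_lattice_interior_regionUnder hf hpos,
    Finset.sum_add_distrib, Finset.sum_sub_distrib, ← Finset.Ioo_insert_right hp,
    Finset.sum_insert Finset.right_notMem_Ioo, Finset.sum_insert Finset.right_notMem_Ioo, hfp,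
    Finset.sum_const, Int.card_Ioo]
  simp only [Int.ceil_zero, Int.floor_zero, nsmul_eq_mul, mul_one]
  omega

end RegionUnder

theorem sum_sum_Ioc_adjacent_intervals {α M : Type*} [LinearOrder α] [LocallyFiniteOrder α]
    [AddCommMonoid M] (g : α → M) {a : ℕ → α} {n : ℕ} (ha : MonotoneOn a (Iic n)) :
    ∑ k ∈ Finset.range n, ∑ x ∈ Finset.Ioc (a k) (a (k + 1)), g x =
      ∑ x ∈ Finset.Ioc (a 0) (a n), g x := by
  induction n with
  | zero => simp
  | succ k ih =>
    have hk : k ∈ Iic (k + 1) := k.le_succ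
    have hk1 : k + 1 ∈ Iic (k + 1) := mem_Iic.mpr le_rfl
    rw [Finset.sum_range_succ, ih (ha.mono (Iic_subset_Iic.mpr k.le_succ)),
      ← Finset.sum_union (Finset.Ioc_disjoint_Ioc_of_le le_rfl),
      Finset.Ioc_union_Ioc_eq_Ioc (ha (Nat.zero_le _) hk k.zero_le) (ha hk hk1 k.le_succ)]

theorem sum_floor_add_ceil_of_symm {f : ℝ → ℝ} {a b u w : ℤ} (hab : a < b) (hfb : f b = w)
    (hsymm : ∀ x ∈ Icc (a : ℝ) b, f (a + b - x) = u + w - f x) :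
    ∑ x ∈ Finset.Ioc a b, (⌊f x⌋ + ⌈f x⌉) = (b - a - 1) * (u + w) + 2 * w := by
  have hceil : ∑ x ∈ Finset.Ioo a b, (u + w - ⌊f x⌋) = ∑ x ∈ Finset.Ioo a b, ⌈f x⌉ := by
    refine Finset.sum_nbij' (fun x => a + b - x) (fun x => a + b - x) ?_ ?_ ?_ ?_ ?_ <;>
      simp only [Finset.mem_Ioo] <;> try omega
    intro x hx
    have hx' : (x : ℝ) ∈ Icc (a : ℝ) b := ⟨by exact_mod_cast hx.1.le, by exact_mod_cast hx.2.le⟩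
    rw [Int.cast_sub, Int.cast_add, hsymm x hx',
      show (u : ℝ) + w - f x = -f x + ((u + w : ℤ) : ℝ) by push_cast; ring,
      Int.ceil_add_intCast, Int.ceil_neg]
    ring
  rw [← Finset.Ioo_insert_right hab, Finset.sum_insert Finset.right_notMem_Ioo, hfb,
    Int.floor_intCast, Int.ceil_intCast, Finset.sum_add_distrib, ← hceil, Finset.sum_sub_distrib,
    Finset.sum_const, Int.card_Ioo, nsmul_eq_mul, Int.toNat_of_nonneg (by omega)]
  ring

theorem integral_eq_of_symm {f : ℝ → ℝ} {a b c : ℝ} (hab : a ≤ b)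
    (hf : IntervalIntegrable f volume a b) (hsymm : ∀ x ∈ Icc a b, f (a + b - x) = c - f x) :
    ∫ x in a..b, f x = (b - a) * c / 2 := by
  have hreflect : ∫ x in a..b, f (a + b - x) = ∫ x in a..b, f x := by
    rw [intervalIntegral.integral_comp_sub_left, add_sub_cancel_right, add_sub_cancel_left]
  rw [intervalIntegral.integral_congr (g := fun x => c - f x)
      (fun x hx => hsymm x (uIcc_of_le hab ▸ hx)),
    intervalIntegral.integral_sub intervalIntegrable_const hf,
    intervalIntegral.integral_const, smul_eq_mul] at hreflect
  linarith

theorem exists_mem_Ico_of_lt {α : Type*} [LinearOrder α] {a : ℕ → α} {x : α} {n : ℕ}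
    (h0 : a 0 ≤ x) (hn : x < a n) : ∃ i < n, x ∈ Ico (a i) (a (i + 1)) := by
  induction n with
  | zero => exact absurd (h0.trans_lt hn) (lt_irrefl _)
  | succ k ih =>
    by_cases hk : a k ≤ x
    · exact ⟨k, k.lt_succ_self, hk, hn⟩
    · obtain ⟨i, hi, hx⟩ := ih (not_le.mp hk)
      exact ⟨i, hi.trans k.lt_succ_self, hx⟩

theorem mk_mem_segment_of_mem_Icc {a b u w x : ℝ} (hab : a < b) (hx : x ∈ Icc a b) :
    (x, u + (w - u) / (b - a) * (x - a)) ∈ segment ℝ (a, u) (b, w) := by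
  have hba : 0 < b - a := sub_pos.mpr hab
  rw [segment_eq_image']
  refine ⟨(x - a) / (b - a), ⟨div_nonneg (sub_nonneg.mpr hx.1) hba.le,
    (div_le_one hba).mpr (by linarith [hx.2])⟩, ?_⟩
  ext
  · simp only [Prod.fst_add, Prod.smul_fst, Prod.fst_sub, smul_eq_mul]
    field_simp
    ring
  · simp only [Prod.snd_add, Prod.smul_snd, Prod.snd_sub, smul_eq_mul]
    ring

structure NewtonDiagram where
  n : ℕ
  P : ℕ → ℤ
  Q : ℕ → ℤ
  one_le_n : 1 ≤ n
  P_zero : P 0 = 0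
  Q_n : Q n = 0
  P_lt_succ : ∀ i < n, P i < P (i + 1)
  Q_succ_lt : ∀ i < n, Q (i + 1) < Q i
  slope_gt : ∀ i, 1 ≤ i → i < n →
    ((Q (i - 1) - Q i : ℤ) : ℚ) / ((P i - P (i - 1) : ℤ) : ℚ) >
      ((Q i - Q (i + 1) : ℤ) : ℚ) / ((P (i + 1) - P i : ℤ) : ℚ)

namespace NewtonDiagram

variable (d : NewtonDiagram)

theorem P_strictMonoOn : StrictMonoOn d.P (Iic d.n) :=
  strictMonoOn_of_lt_add_one ordConnected_Iic fun i _ _ hi => d.P_lt_succ i hi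

theorem Q_strictAntiOn : StrictAntiOn d.Q (Iic d.n) :=
  strictAntiOn_of_add_one_lt ordConnected_Iic fun i _ _ hi => d.Q_succ_lt i hi

theorem P_n_pos : 0 < d.P d.n :=
  d.P_zero ▸ d.P_strictMonoOn (Nat.zero_le _) (le_refl d.n) d.one_le_n

theorem Q_nonneg {i : ℕ} (hi : i ≤ d.n) : 0 ≤ d.Q i :=
  d.Q_n ▸ d.Q_strictAntiOn.antitoneOn hi (le_refl d.n) hi

theorem P_sub_pos {i : ℕ} (hi : i < d.n) : (0 : ℝ) < d.P (i + 1) - d.P i :=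
  sub_pos.mpr (by exact_mod_cast d.P_lt_succ i hi)

noncomputable def slope (i : ℕ) : ℝ :=
  ((d.Q (i + 1) : ℝ) - d.Q i) / ((d.P (i + 1) : ℝ) - d.P i)

noncomputable def edgeLine (i : ℕ) (x : ℝ) : ℝ :=
  d.Q i + d.slope i * (x - d.P i)

theorem slope_neg {i : ℕ} (hi : i < d.n) : d.slope i < 0 :=
  div_neg_of_neg_of_pos (sub_neg.mpr (by exact_mod_cast d.Q_succ_lt i hi)) (d.P_sub_pos hi)

theorem slope_lt_slope_succ {i : ℕ} (hi : i + 1 < d.n) : d.slope i < d.slope (i + 1) := by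
  have h := d.slope_gt (i + 1) i.succ_pos hi
  simp only [Nat.add_sub_cancel] at h
  have h' := (Rat.cast_lt (K := ℝ)).mpr h
  push_cast at h'
  rw [slope, slope, div_lt_div_iff₀ (d.P_sub_pos (by omega)) (d.P_sub_pos hi)]
  rw [div_lt_div_iff₀ (d.P_sub_pos hi) (d.P_sub_pos (by omega))] at h'
  linarith

theorem slope_monotoneOn : MonotoneOn d.slope (Iio d.n) :=
  monotoneOn_of_le_add_one ordConnected_Iio fun _ _ _ hi => (d.slope_lt_slope_succ hi).le

theorem edgeLine_P (i : ℕ) : d.edgeLine i (d.P i) = d.Q i := by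
  simp [edgeLine]

theorem edgeLine_P_succ {i : ℕ} (hi : i < d.n) : d.edgeLine i (d.P (i + 1)) = d.Q (i + 1) := by
  have := (d.P_sub_pos hi).ne'
  simp only [edgeLine, slope]
  field_simp
  ring

theorem edgeLine_strictAnti {i : ℕ} (hi : i < d.n) : StrictAnti (d.edgeLine i) := fun x y hxy => by
  simp only [edgeLine, add_lt_add_iff_left]
  nlinarith [d.slope_neg hi]

theorem edgeLine_P_le_Q {i j : ℕ} (hi : i ≤ d.n) (hj : j < d.n) : d.edgeLine j (d.P i) ≤ d.Q i := by
  set g : ℕ → ℝ := fun k => d.Q k - d.edgeLine j (d.P k) with hg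
  -- the increments of `g` have the sign of `slope k - slope j`
  have step : ∀ k < d.n, g (k + 1) - g k = (d.slope k - d.slope j) * (d.P (k + 1) - d.P k) := by
    intro k hk
    have := d.edgeLine_P_succ hk
    simp only [hg, edgeLine] at this ⊢
    linear_combination -this
  have hmono : MonotoneOn g (Icc j d.n) :=
    monotoneOn_of_le_add_one ordConnected_Icc fun k _ hk hk1 => by
      have hs := d.slope_monotoneOn hj (show k < d.n from hk1.2) hk.1
      nlinarith [step k hk1.2, d.P_sub_pos hk1.2]
  have hanti : AntitoneOn g (Icc 0 j) :=
    antitoneOn_of_add_one_le ordConnected_Icc fun k _ _ hk1 => by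
      have hkj : k < j := hk1.2
      have hs := d.slope_monotoneOn (hkj.trans hj) hj hkj.le
      nlinarith [step k (hkj.trans hj), d.P_sub_pos (hkj.trans hj)]
  have hgj : g j = 0 := by simp [hg, edgeLine_P]
  have hgi : 0 ≤ g i := by
    rcases le_total j i with hji | hij
    · exact hgj ▸ hmono ⟨le_rfl, hj.le⟩ ⟨hji, hi⟩ hji
    · exact hgj ▸ hanti ⟨i.zero_le, hij⟩ ⟨j.zero_le, le_rfl⟩ hij
  simpa [hg] using hgi

noncomputable def envelope : ℕ → ℝ → ℝ
  | 0, _ => 0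
  | k + 1, x => max (envelope k x) (d.edgeLine k x)

theorem envelope_succ (k : ℕ) (x : ℝ) :
    d.envelope (k + 1) x = max (d.envelope k x) (d.edgeLine k x) := rfl

theorem envelope_nonneg (k : ℕ) (x : ℝ) : 0 ≤ d.envelope k x := by
  induction k with
  | zero => exact le_rfl
  | succ k ih => exact ih.trans ((d.envelope_succ k x).symm ▸ le_max_left _ _)

theorem edgeLine_le_envelope {j k : ℕ} (hjk : j < k) (x : ℝ) : d.edgeLine j x ≤ d.envelope k x := by
  induction k with
  | zero => omega
  | succ k ih =>
    rw [envelope_succ]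
    rcases (Nat.lt_succ_iff.mp hjk).eq_or_lt with rfl | hjk
    · exact le_max_right _ _
    · exact (ih hjk).trans (le_max_left _ _)

theorem envelope_le {k : ℕ} {x c : ℝ} (hc : 0 ≤ c) (h : ∀ j < k, d.edgeLine j x ≤ c) :
    d.envelope k x ≤ c := by
  induction k with
  | zero => exact hc
  | succ k ih => exact max_le (ih fun j hj => h j (hj.trans k.lt_succ_self)) (h k k.lt_succ_self)

theorem continuous_envelope (k : ℕ) : Continuous (d.envelope k) := by
  induction k with
  | zero => exact continuous_const
  | succ k ih =>
    exact ih.max (show Continuous (d.edgeLine k) by unfold edgeLine; fun_prop)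

theorem convexOn_envelope (k : ℕ) : ConvexOn ℝ univ (d.envelope k) := by
  induction k with
  | zero => exact convexOn_const 0 convex_univ
  | succ k ih =>
    show ConvexOn ℝ univ (d.envelope k ⊔ d.edgeLine k)
    refine ih.sup ⟨convex_univ, fun x _ y _ a b _ _ hab => le_of_eq ?_⟩
    simp only [edgeLine, smul_eq_mul]
    linear_combination (d.slope k * d.P k - d.Q k) * hab

theorem antitone_envelope {k : ℕ} (hk : k ≤ d.n) : Antitone (d.envelope k) := by
  induction k with
  | zero => exact fun _ _ _ => le_rfl
  | succ k ih =>
    exact fun x y hxy => max_le_max (ih (by omega) hxy) ((d.edgeLine_strictAnti hk).antitone hxy)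

/-- Over `[0, P n]` its graph is the Newton polygon. -/
noncomputable def profile : ℝ → ℝ := d.envelope d.n

theorem profile_nonneg (x : ℝ) : 0 ≤ d.profile x := d.envelope_nonneg _ x

theorem continuous_profile : Continuous d.profile := d.continuous_envelope _

theorem convexOn_profile : ConvexOn ℝ univ d.profile := d.convexOn_envelope _

theorem antitone_profile : Antitone d.profile := d.antitone_envelope le_rfl

theorem profile_P_le {i : ℕ} (hi : i ≤ d.n) : d.profile (d.P i) ≤ d.Q i :=
  d.envelope_le (by exact_mod_cast d.Q_nonneg hi) fun _ hj => d.edgeLine_P_le_Q hi hj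

theorem profile_eq_edgeLine {i : ℕ} (hi : i < d.n) {x : ℝ}
    (hx : x ∈ Icc (d.P i : ℝ) (d.P (i + 1))) : d.profile x = d.edgeLine i x := by
  have hnonneg : 0 ≤ d.edgeLine i x := by
    have := (d.edgeLine_strictAnti hi).antitone hx.2
    rw [d.edgeLine_P_succ hi] at this
    exact (show (0 : ℝ) ≤ d.Q (i + 1) by exact_mod_cast d.Q_nonneg hi).trans this
  -- `ℓⱼ - ℓᵢ` is affine and nonpositive at both ends of the edge
  have hle : ∀ j < d.n, d.edgeLine j x ≤ d.edgeLine i x := by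
    intro j hj
    have ha := d.edgeLine_P_le_Q hi.le hj
    have hb := d.edgeLine_P_le_Q hi hj
    rw [← d.edgeLine_P i] at ha
    rw [← d.edgeLine_P_succ hi] at hb
    have key : ((d.P (i + 1) : ℝ) - d.P i) * (d.edgeLine j x - d.edgeLine i x) =
        (d.P (i + 1) - x) * (d.edgeLine j (d.P i) - d.edgeLine i (d.P i)) +
          (x - d.P i) * (d.edgeLine j (d.P (i + 1)) - d.edgeLine i (d.P (i + 1))) := by
      simp only [edgeLine]
      ring
    nlinarith [d.P_sub_pos hi, hx.1, hx.2]
  exact le_antisymm (d.envelope_le hnonneg hle) (d.edgeLine_le_envelope hi x)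

theorem profile_P_succ {i : ℕ} (hi : i < d.n) : d.profile (d.P (i + 1)) = d.Q (i + 1) := by
  rw [d.profile_eq_edgeLine hi ⟨by exact_mod_cast (d.P_lt_succ i hi).le, le_rfl⟩,
    d.edgeLine_P_succ hi]

theorem profile_P_n : d.profile (d.P d.n) = 0 :=
  le_antisymm (by exact_mod_cast d.Q_n ▸ d.profile_P_le le_rfl) (d.profile_nonneg _)

theorem profile_pos {x : ℝ} (hx : x < d.P d.n) : 0 < d.profile x := by
  have hk : d.n - 1 + 1 = d.n := Nat.sub_add_cancel d.one_le_n
  have hlast := d.edgeLine_P_succ (i := d.n - 1) (by omega)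
  rw [hk, d.Q_n, Int.cast_zero] at hlast
  calc (0 : ℝ) = d.edgeLine (d.n - 1) (d.P d.n) := hlast.symm
    _ < d.edgeLine (d.n - 1) x := d.edgeLine_strictAnti (by omega) hx
    _ ≤ d.profile x := d.edgeLine_le_envelope (by omega) x

theorem profile_reflect {i : ℕ} (hi : i < d.n) {x : ℝ} (hx : x ∈ Icc (d.P i : ℝ) (d.P (i + 1))) :
    d.profile (d.P i + d.P (i + 1) - x) = d.Q i + d.Q (i + 1) - d.profile x := by
  have hx' : (d.P i : ℝ) + d.P (i + 1) - x ∈ Icc (d.P i : ℝ) (d.P (i + 1)) :=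
    ⟨by linarith [hx.2], by linarith [hx.1]⟩
  have hlast := d.edgeLine_P_succ hi
  rw [d.profile_eq_edgeLine hi hx, d.profile_eq_edgeLine hi hx', ← hlast]
  simp only [edgeLine]
  ring

def vertices : Set (ℝ × ℝ) := {x | ∃ i ≤ d.n, x = ((d.P i : ℝ), (d.Q i : ℝ))}

theorem vertex_mem_vertices {i : ℕ} (hi : i ≤ d.n) : ((d.P i : ℝ), (d.Q i : ℝ)) ∈ d.vertices :=
  ⟨i, hi, rfl⟩

theorem convexHull_vertices_add_quadrant :
    convexHull ℝ d.vertices + Ici (0 : ℝ) ×ˢ Ici (0 : ℝ) = {z | 0 ≤ z.1 ∧ d.profile z.1 ≤ z.2} := by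
  apply Subset.antisymm
  · have hconvex : Convex ℝ {z : ℝ × ℝ | 0 ≤ z.1 ∧ d.profile z.1 ≤ z.2} :=
      (d.convexOn_profile.subset (subset_univ _) (convex_Ici 0)).convex_epigraph
    have hhull : convexHull ℝ d.vertices ⊆ {z | 0 ≤ z.1 ∧ d.profile z.1 ≤ z.2} := by
      refine convexHull_min ?_ hconvex
      rintro _ ⟨i, hi, rfl⟩
      refine ⟨?_, d.profile_P_le hi⟩
      show (0 : ℝ) ≤ d.P i
      exact_mod_cast d.P_zero ▸ d.P_strictMonoOn.monotoneOn (Nat.zero_le _) hi i.zero_le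
    rintro _ ⟨a, ha, b, ⟨hb1, hb2⟩, rfl⟩
    obtain ⟨ha1, ha2⟩ := hhull ha
    refine ⟨add_nonneg ha1 hb1, ?_⟩
    have := d.antitone_profile (le_add_of_nonneg_right (mem_Ici.mp hb1) : a.1 ≤ a.1 + b.1)
    simp only [Prod.fst_add, Prod.snd_add]
    linarith [mem_Ici.mp hb2]
  · rintro ⟨x, y⟩ ⟨hx, hy⟩
    have hy0 : 0 ≤ y := (d.profile_nonneg x).trans hy
    rcases le_or_gt (d.P d.n : ℝ) x with hpx | hpx
    · refine ⟨_, subset_convexHull ℝ _ (d.vertex_mem_vertices le_rfl), (x - d.P d.n, y),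
        ⟨sub_nonneg.mpr hpx, hy0⟩, ?_⟩
      simp [d.Q_n]
    · obtain ⟨i, hi, hxi⟩ := exists_mem_Ico_of_lt (a := fun i => (d.P i : ℝ))
        (by simpa [d.P_zero] using hx) hpx
      have hxi' : x ∈ Icc (d.P i : ℝ) (d.P (i + 1)) := Ico_subset_Icc_self hxi
      have hseg : (x, d.edgeLine i x) ∈ convexHull ℝ d.vertices :=
        segment_subset_convexHull (d.vertex_mem_vertices hi.le) (d.vertex_mem_vertices hi)
          (mk_mem_segment_of_mem_Icc (by exact_mod_cast d.P_lt_succ i hi) hxi')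
      refine ⟨_, hseg, (0, y - d.edgeLine i x), ⟨le_refl (0 : ℝ), ?_⟩, by simp⟩
      rw [← d.profile_eq_edgeLine hi hxi']
      exact sub_nonneg.mpr hy

theorem gammaMinus_eq_s12 : gammaMinus d.n d.P d.Q = regionUnder d.profile (d.P d.n) := by
  change closure (_ \ (convexHull ℝ d.vertices + _)) = _
  rw [convexHull_vertices_add_quadrant, ← closure_setOf_lt_eq_regionUnder d.continuous_profile
    d.antitone_profile (by exact_mod_cast d.P_n_pos) d.profile_P_n fun _ => d.profile_pos]
  congr 1
  ext z
  simp only [Set.mem_sdiff, mem_prod, mem_Ici, mem_ofPred_eq, mem_Ico, not_and, not_le]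
  exact ⟨fun ⟨⟨h1, h2⟩, h3⟩ => ⟨h1, h2, h3 h1⟩, fun ⟨h1, h2, h3⟩ => ⟨⟨h1, h2⟩, fun _ => h3⟩⟩

def twiceArea : ℤ := ∑ i ∈ Finset.range d.n, (d.P (i + 1) - d.P i) * (d.Q i + d.Q (i + 1))

theorem integral_profile : ∫ x in (0 : ℝ)..d.P d.n, d.profile x = d.twiceArea / 2 := by
  have hsum := intervalIntegral.sum_integral_adjacent_intervals (μ := volume)
    (a := fun i => (d.P i : ℝ)) (n := d.n) fun _ _ => d.continuous_profile.intervalIntegrable _ _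
  simp only [d.P_zero, Int.cast_zero] at hsum
  rw [← hsum, twiceArea, Int.cast_sum, Finset.sum_div]
  refine Finset.sum_congr rfl fun i hi => ?_
  have hi := Finset.mem_range.mp hi
  rw [integral_eq_of_symm (by exact_mod_cast (d.P_lt_succ i hi).le)
    (d.continuous_profile.intervalIntegrable _ _) fun x hx => d.profile_reflect hi hx]
  push_cast
  ring

theorem two_mul_volume_regionUnder_profile :
    2 * (volume (regionUnder d.profile (d.P d.n))).toReal = d.twiceArea := by
  have hp : (0 : ℝ) ≤ d.P d.n := by exact_mod_cast d.P_n_pos.le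
  rw [volume_regionUnder d.continuous_profile hp fun x _ => d.profile_nonneg x,
    ENNReal.toReal_ofReal (intervalIntegral.integral_nonneg hp fun x _ => d.profile_nonneg x),
    integral_profile]
  ring

theorem sum_floor_add_ceil_profile :
    ∑ x ∈ Finset.Ioc 0 (d.P d.n), (⌊d.profile x⌋ + ⌈d.profile x⌉) = d.twiceArea - d.Q 0 := by
  have hsum := sum_sum_Ioc_adjacent_intervals (fun x : ℤ => ⌊d.profile x⌋ + ⌈d.profile x⌉)
    d.P_strictMonoOn.monotoneOn
  have htelescope := Finset.sum_range_sub' d.Q d.n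
  rw [d.P_zero] at hsum
  rw [d.Q_n, sub_zero] at htelescope
  rw [← hsum, twiceArea, ← htelescope, ← Finset.sum_sub_distrib]
  refine Finset.sum_congr rfl fun i hi => ?_
  have hi := Finset.mem_range.mp hi
  rw [sum_floor_add_ceil_of_symm (d.P_lt_succ i hi) (d.profile_P_succ hi)
    fun x hx => d.profile_reflect hi hx]
  ring

end NewtonDiagram

theorem milnor_eq_vertices_add_regions_general (n : ℕ) (hn : 1 ≤ n) (P Q : ℕ → ℤ)
    (hP0 : P 0 = 0) (hQn : Q n = 0)
    (hPmono : ∀ i < n, P i < P (i + 1))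
    (hQmono : ∀ i < n, Q (i + 1) < Q i)
    (hconv : ∀ i, 1 ≤ i → i < n →
      ((Q (i - 1) - Q i : ℤ) : ℚ) / ((P i - P (i - 1) : ℤ) : ℚ) >
        ((Q i - Q (i + 1) : ℤ) : ℚ) / ((P (i + 1) - P i : ℤ) : ℚ)) :
    2 * (volume (gammaMinus n P Q)).toReal - (((P n : ℤ) : ℝ) + ((Q 0 : ℤ) : ℝ)) + 1 =
      ({ij : ℕ × ℕ | unitSq ij.1 ij.2 ⊆ gammaMinus n P Q}.ncard : ℝ) +
      ({x : ℝ × ℝ | x ∈ interior (gammaMinus n P Q) ∧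
        ∃ a b : ℤ, x = ((a : ℝ), (b : ℝ))}.ncard : ℝ) := by
  let d : NewtonDiagram := ⟨n, P, Q, hn, hP0, hQn, hPmono, hQmono, hconv⟩
  have hΓ : gammaMinus n P Q = regionUnder d.profile (P n) := d.gammaMinus_eq_s12
  have hcount := ncard_add_ncard_regionUnder d.continuous_profile d.antitone_profile d.P_n_pos
    d.profile_P_n fun _ => d.profile_pos
  rw [d.sum_floor_add_ceil_profile] at hcount
  rw [hΓ, d.two_mul_volume_regionUnder_profile]
  have hcount' := congrArg (Int.cast : ℤ → ℝ) hcount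
  push_cast at hcount'
  linarith

/-- For a Newton diagram datum with `gcd(pᵢ,qᵢ) = 1`, with `p = Pₙ` and `q = Q₀`:
`2·vol(Γ₋) - (p + q) + 1 = v + r`, where `v` is the number of unit lattice squares with
nonnegative-integer corner contained in `Γ₋`, and `r` is the number of lattice points in
the topological interior of `Γ₋`. (This is the combinatorial content of Theorem 1.1:
`μ(f) = v(T_F|_{Γ₋(f)}) + r(T_F|_{Γ₋(f)})`.) -/
theorem milnor_eq_vertices_add_regions (n : ℕ) (hn : 1 ≤ n) (P Q : ℕ → ℤ)
    (hP0 : P 0 = 0) (hQn : Q n = 0)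
    (hPmono : ∀ i < n, P i < P (i + 1))
    (hQmono : ∀ i < n, Q (i + 1) < Q i)
    (hconv : ∀ i, 1 ≤ i → i < n →
      ((Q (i - 1) - Q i : ℤ) : ℚ) / ((P i - P (i - 1) : ℤ) : ℚ) >
        ((Q i - Q (i + 1) : ℤ) : ℚ) / ((P (i + 1) - P i : ℤ) : ℚ))
    (hgcd : ∀ i, 1 ≤ i → i ≤ n → Int.gcd (P i - P (i - 1)) (Q (i - 1) - Q i) = 1) :
    2 * (volume (gammaMinus n P Q)).toReal - (((P n : ℤ) : ℝ) + ((Q 0 : ℤ) : ℝ)) + 1 =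
      ({ij : ℕ × ℕ | unitSq ij.1 ij.2 ⊆ gammaMinus n P Q}.ncard : ℝ) +
      ({x : ℝ × ℝ | x ∈ interior (gammaMinus n P Q) ∧
        ∃ a b : ℤ, x = ((a : ℝ), (b : ℝ))}.ncard : ℝ) :=
  milnor_eq_vertices_add_regions_general n hn P Q hP0 hQn hPmono hQmono hconv
end
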